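/- arXiv:math/0502407 — 7 statements merged into one kernel-verified Lean document; each statement's English description precedes it below -/
import Mathlib

section
/- Let q : ℝ → ℝ be continuous on [0,1], and let λ, μ ∈ ℝ with λ ≠ μ. Let f, g : ℝ → ℝ be twice continuously differentiable with −f'' + q f = λ f and −g'' + q g = μ g on [0,1]. Then ∫₀¹ (f(x)² (g²)'(x) − (f²)'(x) g(x)²) dx = ((f g' − f' g)(1)² − (f g' − f' g)(0)²)/(λ − μ). -/
/-!
If `f` and `g` solve `−u'' + q u = λ u` and `−u'' + q u = μ u`, the potential cancels in the
derivative of their Wronskian: `[f,g]' = f g'' − f'' g = (λ − μ) f g`. Hence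
`([f,g]²)' = 2 (λ − μ) f g (f g' − f' g) = (λ − μ) (f² (g²)' − (f²)' g²)`,
and the fundamental theorem of calculus gives the identity.
-/

open Set

def wronskian (f f' g g' : ℝ → ℝ) (x : ℝ) : ℝ := f x * g' x - f' x * g x

theorem hasDerivAt_wronskian {f f' f'' g g' g'' : ℝ → ℝ} {x : ℝ}
    (hf : HasDerivAt f (f' x) x) (hf' : HasDerivAt f' (f'' x) x)
    (hg : HasDerivAt g (g' x) x) (hg' : HasDerivAt g' (g'' x) x) :
    HasDerivAt (wronskian f f' g g') (f x * g'' x - f'' x * g x) x := by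
  refine ((hf.mul hg').sub (hf'.mul hg)).congr_deriv ?_
  ring

theorem hasDerivAt_wronskian_sq_of_sturmLiouville {q f f' f'' g g' g'' : ℝ → ℝ}
    {lam mu x : ℝ}
    (hf : HasDerivAt f (f' x) x) (hf' : HasDerivAt f' (f'' x) x)
    (hg : HasDerivAt g (g' x) x) (hg' : HasDerivAt g' (g'' x) x)
    (hfeq : -f'' x + q x * f x = lam * f x) (hgeq : -g'' x + q x * g x = mu * g x) :
    HasDerivAt (fun y => wronskian f f' g g' y ^ 2)
      ((lam - mu) * (f x ^ 2 * (2 * g x * g' x) - (2 * f x * f' x) * g x ^ 2)) x := by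
  have hW : f x * g'' x - f'' x * g x = (lam - mu) * (f x * g x) := by
    linear_combination g x * hfeq - f x * hgeq
  refine ((hasDerivAt_wronskian hf hf' hg hg').pow 2).congr_deriv ?_
  rw [hW, wronskian]
  ring

theorem gamma_sq_eq_wronskian_sq_diff_general
    (q : ℝ → ℝ)
    (lam mu : ℝ) (hlm : lam ≠ mu)
    (f f' f'' g g' g'' : ℝ → ℝ)
    (hf : ∀ x ∈ Set.Icc (0:ℝ) 1, HasDerivAt f (f' x) x ∧ HasDerivAt f' (f'' x) x)
    (hg : ∀ x ∈ Set.Icc (0:ℝ) 1, HasDerivAt g (g' x) x ∧ HasDerivAt g' (g'' x) x)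
    (hfeq : ∀ x ∈ Set.Icc (0:ℝ) 1, -f'' x + q x * f x = lam * f x)
    (hgeq : ∀ x ∈ Set.Icc (0:ℝ) 1, -g'' x + q x * g x = mu * g x) :
    (∫ x in (0:ℝ)..1, ((f x)^2 * (2 * g x * g' x) - (2 * f x * f' x) * (g x)^2)) =
      ((f 1 * g' 1 - f' 1 * g 1)^2 - (f 0 * g' 0 - f' 0 * g 0)^2) / (lam - mu) := by
  have hlm' : lam - mu ≠ 0 := sub_ne_zero.mpr hlm
  have hderiv : ∀ x ∈ uIcc (0:ℝ) 1, HasDerivAt (fun y => wronskian f f' g g' y ^ 2 / (lam - mu))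
      (f x ^ 2 * (2 * g x * g' x) - (2 * f x * f' x) * g x ^ 2) x := by
    intro x hx
    rw [uIcc_of_le zero_le_one] at hx
    have h := (hasDerivAt_wronskian_sq_of_sturmLiouville (hf x hx).1 (hf x hx).2
      (hg x hx).1 (hg x hx).2 (hfeq x hx) (hgeq x hx)).div_const (lam - mu)
    rwa [mul_div_cancel_left₀ _ hlm'] at h
  have hcont : ContinuousOn
      (fun x => f x ^ 2 * (2 * g x * g' x) - (2 * f x * f' x) * g x ^ 2) (uIcc (0:ℝ) 1) := by
    rw [uIcc_of_le zero_le_one]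
    have cf : ContinuousOn f (Icc 0 1) := fun x hx => (hf x hx).1.continuousAt.continuousWithinAt
    have cf' : ContinuousOn f' (Icc 0 1) := fun x hx => (hf x hx).2.continuousAt.continuousWithinAt
    have cg : ContinuousOn g (Icc 0 1) := fun x hx => (hg x hx).1.continuousAt.continuousWithinAt
    have cg' : ContinuousOn g' (Icc 0 1) := fun x hx => (hg x hx).2.continuousAt.continuousWithinAt
    fun_prop
  rw [intervalIntegral.integral_eq_sub_of_hasDerivAt hderiv hcont.intervalIntegrable,
    wronskian, wronskian, sub_div]

/-- For `C²` solutions `f, g` of `−u'' + q u = λ u` resp. `−u'' + q u = μ u` on `[0,1]`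
with `λ ≠ μ`, we have
`Γ(f², g²) = ∫₀¹ (f² (g²)' − (f²)' g²) = ([f,g](1)² − [f,g](0)²)/(λ − μ)`. -/
theorem gamma_sq_eq_wronskian_sq_diff
    (q : ℝ → ℝ) (hq : ContinuousOn q (Set.Icc (0:ℝ) 1))
    (lam mu : ℝ) (hlm : lam ≠ mu)
    (f f' f'' g g' g'' : ℝ → ℝ)
    (hf : ∀ x ∈ Set.Icc (0:ℝ) 1, HasDerivAt f (f' x) x ∧ HasDerivAt f' (f'' x) x)
    (hf'' : ContinuousOn f'' (Set.Icc (0:ℝ) 1))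
    (hg : ∀ x ∈ Set.Icc (0:ℝ) 1, HasDerivAt g (g' x) x ∧ HasDerivAt g' (g'' x) x)
    (hg'' : ContinuousOn g'' (Set.Icc (0:ℝ) 1))
    (hfeq : ∀ x ∈ Set.Icc (0:ℝ) 1, -f'' x + q x * f x = lam * f x)
    (hgeq : ∀ x ∈ Set.Icc (0:ℝ) 1, -g'' x + q x * g x = mu * g x) :
    (∫ x in (0:ℝ)..1, ((f x)^2 * (2 * g x * g' x) - (2 * f x * f' x) * (g x)^2)) =
      ((f 1 * g' 1 - f' 1 * g 1)^2 - (f 0 * g' 0 - f' 0 * g 0)^2) / (lam - mu) :=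
  gamma_sq_eq_wronskian_sq_diff_general q lam mu hlm f f' f'' g g' g'' hf hg hfeq hgeq
end

section
/- Let q : ℝ → ℝ be continuous on [0,1], α, β ∈ ℝ, and λ₁, λ₂ ∈ ℝ. Let g₁, g₂ : ℝ → ℝ be twice continuously differentiable with −gᵢ'' + q gᵢ = λᵢ gᵢ on [0,1], and suppose both satisfy the separated boundary conditions gᵢ(0)cos α + gᵢ'(0)sin α = 0 and gᵢ(1)cos β + gᵢ'(1)sin β = 0 (i = 1,2). Then Γ(g₁², g₂²) = ∫₀¹ (g₁(x)² (g₂²)'(x) − (g₁²)'(x) g₂(x)²) dx = 0. -/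
/-!
The Wronskian `W = g₁ g₂' - g₁' g₂` satisfies Lagrange's identity `W' = (λ₁ - λ₂) g₁ g₂`, and it
vanishes at `0` and at `1` because `g₁` and `g₂` satisfy the same separated boundary conditions.
The integrand of `Γ(g₁², g₂²)` is `2 g₁ g₂ W`, so `(λ₁ - λ₂) Γ(g₁², g₂²) = [W²]₀¹ = 0`;
when `λ₁ = λ₂` the Wronskian is constant, hence identically zero.
-/

open Set intervalIntegral

theorem mul_sub_mul_eq_zero_of_cos_sin {a a' b b' θ : ℝ}
    (ha : a * Real.cos θ + a' * Real.sin θ = 0) (hb : b * Real.cos θ + b' * Real.sin θ = 0) :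
    a * b' - a' * b = 0 := by
  -- `(a, a')` and `(b, b')` are both orthogonal to the unit vector `(cos θ, sin θ)`.
  linear_combination (Real.cos θ * b' - Real.sin θ * b) * ha
    - (Real.cos θ * a' - Real.sin θ * a) * hb - (a * b' - a' * b) * Real.sin_sq_add_cos_sq θ

theorem eq_zero_of_hasDerivAt_zero_of_uIcc {a b : ℝ} {W : ℝ → ℝ}
    (hW : ∀ x ∈ uIcc a b, HasDerivAt W 0 x) (ha : W a = 0) {x : ℝ} (hx : x ∈ uIcc a b) :
    W x = 0 := by
  have h := integral_eq_sub_of_hasDerivAt (fun y hy => hW y (uIcc_subset_uIcc_left hx hy))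
    (intervalIntegrable_const (c := (0 : ℝ)))
  simpa [ha, eq_comm] using h

theorem integral_mul_eq_zero_of_hasDerivAt_const_mul {a b c : ℝ} {p W : ℝ → ℝ}
    (hW : ∀ x ∈ uIcc a b, HasDerivAt W (c * p x) x) (hp : ContinuousOn p (uIcc a b))
    (ha : W a = 0) (hb : W b = 0) :
    ∫ x in a..b, p x * W x = 0 := by
  have hW_cont : ContinuousOn W (uIcc a b) := fun x hx =>
    (hW x hx).continuousAt.continuousWithinAt
  have hsq : ∀ x ∈ uIcc a b, HasDerivAt (fun y => W y ^ 2 / 2) (c * (p x * W x)) x := by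
    intro x hx
    refine (((hW x hx).pow 2).div_const 2).congr_deriv ?_
    ring
  have hc : c * ∫ x in a..b, p x * W x = 0 := by
    rw [← integral_const_mul,
      integral_eq_sub_of_hasDerivAt hsq ((hp.mul hW_cont).intervalIntegrable.const_mul c), ha, hb]
    norm_num
  rcases mul_eq_zero.1 hc with rfl | h
  · have hW0 : ∀ x ∈ uIcc a b, W x = 0 :=
      fun x => eq_zero_of_hasDerivAt_zero_of_uIcc (by simpa using hW) ha
    rw [integral_congr (g := 0) fun x hx => by simp only [hW0 x hx, mul_zero, Pi.zero_apply]]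
    exact integral_zero
  · exact h

theorem hasDerivAt_wronskian_of_sturmLiouville {q u u' u'' v v' v'' : ℝ → ℝ} {μ ν x : ℝ}
    (hu : HasDerivAt u (u' x) x) (hu' : HasDerivAt u' (u'' x) x)
    (hv : HasDerivAt v (v' x) x) (hv' : HasDerivAt v' (v'' x) x)
    (hu_eq : -u'' x + q x * u x = μ * u x) (hv_eq : -v'' x + q x * v x = ν * v x) :
    HasDerivAt (fun y => u y * v' y - u' y * v y) ((μ - ν) * (u x * v x)) x :=
  ((hu.mul hv').sub (hu'.mul hv)).congr_deriv <| by
    linear_combination v x * hu_eq - u x * hv_eq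

theorem gamma_sq_eq_zero_same_bc_general
    (q : ℝ → ℝ)
    (α β : ℝ) (lam₁ lam₂ : ℝ)
    (g₁ g₁' g₁'' g₂ g₂' g₂'' : ℝ → ℝ)
    (hg₁ : ∀ x ∈ Set.Icc (0:ℝ) 1, HasDerivAt g₁ (g₁' x) x ∧ HasDerivAt g₁' (g₁'' x) x)
    (hg₂ : ∀ x ∈ Set.Icc (0:ℝ) 1, HasDerivAt g₂ (g₂' x) x ∧ HasDerivAt g₂' (g₂'' x) x)
    (heq₁ : ∀ x ∈ Set.Icc (0:ℝ) 1, -g₁'' x + q x * g₁ x = lam₁ * g₁ x)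
    (heq₂ : ∀ x ∈ Set.Icc (0:ℝ) 1, -g₂'' x + q x * g₂ x = lam₂ * g₂ x)
    (hbc₁0 : g₁ 0 * Real.cos α + g₁' 0 * Real.sin α = 0)
    (hbc₁1 : g₁ 1 * Real.cos β + g₁' 1 * Real.sin β = 0)
    (hbc₂0 : g₂ 0 * Real.cos α + g₂' 0 * Real.sin α = 0)
    (hbc₂1 : g₂ 1 * Real.cos β + g₂' 1 * Real.sin β = 0) :
    (∫ x in (0:ℝ)..1, ((g₁ x)^2 * (2 * g₂ x * g₂' x) - (2 * g₁ x * g₁' x) * (g₂ x)^2)) = 0 := by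
  set W : ℝ → ℝ := fun x => g₁ x * g₂' x - g₁' x * g₂ x
  have hI : uIcc (0:ℝ) 1 = Icc 0 1 := uIcc_of_le zero_le_one
  have hW : ∀ x ∈ uIcc (0:ℝ) 1, HasDerivAt W ((lam₁ - lam₂) * (g₁ x * g₂ x)) x := by
    rw [hI]
    exact fun x hx => hasDerivAt_wronskian_of_sturmLiouville (hg₁ x hx).1 (hg₁ x hx).2
      (hg₂ x hx).1 (hg₂ x hx).2 (heq₁ x hx) (heq₂ x hx)
  have hcont : ContinuousOn (fun x => g₁ x * g₂ x) (uIcc (0:ℝ) 1) := by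
    rw [hI]
    exact fun x hx => ((hg₁ x hx).1.continuousAt.mul (hg₂ x hx).1.continuousAt).continuousWithinAt
  have hintegrand : (fun x => (g₁ x)^2 * (2 * g₂ x * g₂' x) - (2 * g₁ x * g₁' x) * (g₂ x)^2)
      = fun x => 2 * (g₁ x * g₂ x * W x) := funext fun x => by ring
  rw [hintegrand, integral_const_mul, integral_mul_eq_zero_of_hasDerivAt_const_mul hW hcont
    (mul_sub_mul_eq_zero_of_cos_sin hbc₁0 hbc₂0) (mul_sub_mul_eq_zero_of_cos_sin hbc₁1 hbc₂1),
    mul_zero]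

/-- If `g₁, g₂` are `C²` solutions of `−u'' + q u = λᵢ u` on `[0,1]` satisfying the same
separated boundary conditions with angles `α` at `0` and `β` at `1`, then
`Γ(g₁², g₂²) = ∫₀¹ (g₁² (g₂²)' − (g₁²)' g₂²) = 0`. -/
theorem gamma_sq_eq_zero_same_bc
    (q : ℝ → ℝ) (hq : ContinuousOn q (Set.Icc (0:ℝ) 1))
    (α β : ℝ) (lam₁ lam₂ : ℝ)
    (g₁ g₁' g₁'' g₂ g₂' g₂'' : ℝ → ℝ)
    (hg₁ : ∀ x ∈ Set.Icc (0:ℝ) 1, HasDerivAt g₁ (g₁' x) x ∧ HasDerivAt g₁' (g₁'' x) x)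
    (hg₁'' : ContinuousOn g₁'' (Set.Icc (0:ℝ) 1))
    (hg₂ : ∀ x ∈ Set.Icc (0:ℝ) 1, HasDerivAt g₂ (g₂' x) x ∧ HasDerivAt g₂' (g₂'' x) x)
    (hg₂'' : ContinuousOn g₂'' (Set.Icc (0:ℝ) 1))
    (heq₁ : ∀ x ∈ Set.Icc (0:ℝ) 1, -g₁'' x + q x * g₁ x = lam₁ * g₁ x)
    (heq₂ : ∀ x ∈ Set.Icc (0:ℝ) 1, -g₂'' x + q x * g₂ x = lam₂ * g₂ x)
    (hbc₁0 : g₁ 0 * Real.cos α + g₁' 0 * Real.sin α = 0)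
    (hbc₁1 : g₁ 1 * Real.cos β + g₁' 1 * Real.sin β = 0)
    (hbc₂0 : g₂ 0 * Real.cos α + g₂' 0 * Real.sin α = 0)
    (hbc₂1 : g₂ 1 * Real.cos β + g₂' 1 * Real.sin β = 0) :
    (∫ x in (0:ℝ)..1, ((g₁ x)^2 * (2 * g₂ x * g₂' x) - (2 * g₁ x * g₁' x) * (g₂ x)^2)) = 0 :=
  gamma_sq_eq_zero_same_bc_general q α β lam₁ lam₂ g₁ g₁' g₁'' g₂ g₂' g₂'' hg₁ hg₂ heq₁ heq₂ hbc₁0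
    hbc₁1 hbc₂0 hbc₂1
end

section
/- Let q : ℝ → ℝ be continuous on [0,1] and λ ∈ ℝ. Let s, c : ℝ → ℝ be twice continuously differentiable with −s'' + q s = λ s and −c'' + q c = λ c on [0,1], and suppose s is normalized so that ∫₀¹ s(x)² dx = 1. Then ∫₀¹ ((c s)(x)(s²)'(x) − (c s)'(x) s(x)²) dx = c(1)s'(1) − c'(1)s(1), i.e. Γ(cs, s²) equals the (constant) Wronskian [c,s]. -/
/-- If `s, c` are `C²` solutions of `−u'' + q u = λ u` on `[0,1]` with the same spectral
parameter `λ`, and `s` is `L²`-normalized (`∫₀¹ s² = 1`), then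
`Γ(cs, s²) = ∫₀¹ ((cs)(s²)' − (cs)' s²) = c(1)s'(1) − c'(1)s(1)`, the constant Wronskian `[c,s]`. -/
theorem gamma_cs_sq_eq_wronskian
    (q : ℝ → ℝ) (hq : ContinuousOn q (Set.Icc (0:ℝ) 1))
    (lam : ℝ)
    (s s' s'' c c' c'' : ℝ → ℝ)
    (hs : ∀ x ∈ Set.Icc (0:ℝ) 1, HasDerivAt s (s' x) x ∧ HasDerivAt s' (s'' x) x)
    (hs'' : ContinuousOn s'' (Set.Icc (0:ℝ) 1))
    (hc : ∀ x ∈ Set.Icc (0:ℝ) 1, HasDerivAt c (c' x) x ∧ HasDerivAt c' (c'' x) x)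
    (hc'' : ContinuousOn c'' (Set.Icc (0:ℝ) 1))
    (hseq : ∀ x ∈ Set.Icc (0:ℝ) 1, -s'' x + q x * s x = lam * s x)
    (hceq : ∀ x ∈ Set.Icc (0:ℝ) 1, -c'' x + q x * c x = lam * c x)
    (hnorm : (∫ x in (0:ℝ)..1, (s x)^2) = 1) :
    (∫ x in (0:ℝ)..1,
        ((c x * s x) * (2 * s x * s' x) - (c' x * s x + c x * s' x) * (s x)^2)) =
      c 1 * s' 1 - c' 1 * s 1 := by
  set W : ℝ → ℝ := fun x => c x * s' x - c' x * s x with hW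
  have hWd : ∀ x ∈ Set.Icc (0:ℝ) 1, HasDerivAt W 0 x := by
    intro x hx
    have h1 := (hc x hx).1
    have h2 := (hc x hx).2
    have h3 := (hs x hx).1
    have h4 := (hs x hx).2
    have hd : HasDerivAt W (c' x * s' x + c x * s'' x - (c'' x * s x + c' x * s' x)) x :=
      (h1.mul h4).sub (h2.mul h3)
    have e1 := hseq x hx
    have e2 := hceq x hx
    have : c' x * s' x + c x * s'' x - (c'' x * s x + c' x * s' x) = 0 := by
      linear_combination (-(c x)) * e1 + s x * e2
    rwa [this] at hd
  have hWconst : ∀ x ∈ Set.Icc (0:ℝ) 1, W x = W 0 := by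
    apply constant_of_has_deriv_right_zero
    · exact fun x hx => (hWd x hx).continuousAt.continuousWithinAt
    · intro x hx
      exact (hWd x (Set.mem_Icc_of_Ico hx)).hasDerivWithinAt
  have h1 : W 1 = W 0 := hWconst 1 (by norm_num)
  have hcongr : (∫ x in (0:ℝ)..1,
        ((c x * s x) * (2 * s x * s' x) - (c' x * s x + c x * s' x) * (s x)^2)) =
      ∫ x in (0:ℝ)..1, W 1 * (s x)^2 := by
    apply intervalIntegral.integral_congr
    intro x hx
    rw [Set.uIcc_of_le (by norm_num : (0:ℝ) ≤ 1)] at hx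
    have hx0 := hWconst x hx
    simp only [hW] at hx0 h1 ⊢
    linear_combination (s x ^ 2) * hx0 - (s x ^ 2) * h1
  rw [hcongr, intervalIntegral.integral_const_mul, hnorm, mul_one]
end

section
/- Let q : ℝ → ℝ be continuous on [0,1] and λ, μ ∈ ℝ with λ ≠ μ. Let f₁, f₂, g : ℝ → ℝ be twice continuously differentiable with −f₁'' + q f₁ = λ f₁, −f₂'' + q f₂ = λ f₂, and −g'' + q g = μ g on [0,1]. Then ∫₀¹ ((f₁f₂)(x)(g²)'(x) − (f₁f₂)'(x) g(x)²) dx = (([f₁,g]·[f₂,g])(1) − ([f₁,g]·[f₂,g])(0))/(λ − μ), where [u,v] = u v' − u' v. -/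
/-- If `f₁, f₂` are `C²` solutions of `−u'' + q u = λ u` and `g` is a `C²` solution of
`−u'' + q u = μ u` on `[0,1]` with `λ ≠ μ`, then
`Γ(f₁f₂, g²) = (([f₁,g][f₂,g])(1) − ([f₁,g][f₂,g])(0))/(λ − μ)`. -/
theorem gamma_prod_sq_eq_wronskian_prod_diff
    (q : ℝ → ℝ) (hq : ContinuousOn q (Set.Icc (0:ℝ) 1))
    (lam mu : ℝ) (hlm : lam ≠ mu)
    (f₁ f₁' f₁'' f₂ f₂' f₂'' g g' g'' : ℝ → ℝ)
    (hf₁ : ∀ x ∈ Set.Icc (0:ℝ) 1, HasDerivAt f₁ (f₁' x) x ∧ HasDerivAt f₁' (f₁'' x) x)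
    (hf₁'' : ContinuousOn f₁'' (Set.Icc (0:ℝ) 1))
    (hf₂ : ∀ x ∈ Set.Icc (0:ℝ) 1, HasDerivAt f₂ (f₂' x) x ∧ HasDerivAt f₂' (f₂'' x) x)
    (hf₂'' : ContinuousOn f₂'' (Set.Icc (0:ℝ) 1))
    (hg : ∀ x ∈ Set.Icc (0:ℝ) 1, HasDerivAt g (g' x) x ∧ HasDerivAt g' (g'' x) x)
    (hg'' : ContinuousOn g'' (Set.Icc (0:ℝ) 1))
    (heq₁ : ∀ x ∈ Set.Icc (0:ℝ) 1, -f₁'' x + q x * f₁ x = lam * f₁ x)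
    (heq₂ : ∀ x ∈ Set.Icc (0:ℝ) 1, -f₂'' x + q x * f₂ x = lam * f₂ x)
    (heqg : ∀ x ∈ Set.Icc (0:ℝ) 1, -g'' x + q x * g x = mu * g x) :
    (∫ x in (0:ℝ)..1,
        ((f₁ x * f₂ x) * (2 * g x * g' x)
          - (f₁' x * f₂ x + f₁ x * f₂' x) * (g x)^2)) =
      ((f₁ 1 * g' 1 - f₁' 1 * g 1) * (f₂ 1 * g' 1 - f₂' 1 * g 1)
        - (f₁ 0 * g' 0 - f₁' 0 * g 0) * (f₂ 0 * g' 0 - f₂' 0 * g 0)) / (lam - mu) := by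
  have hlm' : lam - mu ≠ 0 := sub_ne_zero.mpr hlm
  set I := Set.Icc (0:ℝ) 1
  set F : ℝ → ℝ := fun x =>
    ((f₁ x * g' x - f₁' x * g x) * (f₂ x * g' x - f₂' x * g x)) / (lam - mu) with hF
  -- F has derivative equal to the integrand on I
  have hderiv : ∀ x ∈ I, HasDerivAt F
      ((f₁ x * f₂ x) * (2 * g x * g' x)
        - (f₁' x * f₂ x + f₁ x * f₂' x) * (g x)^2) x := by
    intro x hx
    have h1 := (hf₁ x hx).1; have h1' := (hf₁ x hx).2
    have h2 := (hf₂ x hx).1; have h2' := (hf₂ x hx).2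
    have h3 := (hg x hx).1; have h3' := (hg x hx).2
    have e1 : f₁'' x = (q x - lam) * f₁ x := by have := heq₁ x hx; ring_nf; linarith
    have e2 : f₂'' x = (q x - lam) * f₂ x := by have := heq₂ x hx; ring_nf; linarith
    have e3 : g'' x = (q x - mu) * g x := by have := heqg x hx; ring_nf; linarith
    have hW : HasDerivAt F
        ((((f₁' x * g' x + f₁ x * g'' x) - (f₁'' x * g x + f₁' x * g' x)) *
            (f₂ x * g' x - f₂' x * g x)
          + (f₁ x * g' x - f₁' x * g x) *
            ((f₂' x * g' x + f₂ x * g'' x) - (f₂'' x * g x + f₂' x * g' x))) / (lam - mu)) x := by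
      exact (((h1.mul h3').sub (h1'.mul h3)).mul ((h2.mul h3').sub (h2'.mul h3))).div_const _
    convert hW using 1
    rw [e1, e2, e3]
    field_simp
    ring
  -- integrand is continuous on I
  have hcf₁ : ContinuousOn f₁ I := fun x hx => ((hf₁ x hx).1.continuousAt).continuousWithinAt
  have hcf₁' : ContinuousOn f₁' I := fun x hx => ((hf₁ x hx).2.continuousAt).continuousWithinAt
  have hcf₂ : ContinuousOn f₂ I := fun x hx => ((hf₂ x hx).1.continuousAt).continuousWithinAt
  have hcf₂' : ContinuousOn f₂' I := fun x hx => ((hf₂ x hx).2.continuousAt).continuousWithinAt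
  have hcg : ContinuousOn g I := fun x hx => ((hg x hx).1.continuousAt).continuousWithinAt
  have hcg' : ContinuousOn g' I := fun x hx => ((hg x hx).2.continuousAt).continuousWithinAt
  have hcont : ContinuousOn (fun x =>
      (f₁ x * f₂ x) * (2 * g x * g' x)
        - (f₁' x * f₂ x + f₁ x * f₂' x) * (g x)^2) I := by
    apply ContinuousOn.sub
    · exact (hcf₁.mul hcf₂).mul ((continuousOn_const.mul hcg).mul hcg')
    · exact ((hcf₁'.mul hcf₂).add (hcf₁.mul hcf₂')).mul (hcg.pow 2)
  have hInt : IntervalIntegrable (fun x =>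
      (f₁ x * f₂ x) * (2 * g x * g' x)
        - (f₁' x * f₂ x + f₁ x * f₂' x) * (g x)^2) MeasureTheory.volume 0 1 := by
    apply ContinuousOn.intervalIntegrable
    rwa [Set.uIcc_of_le (by norm_num : (0:ℝ) ≤ 1)]
  have huIcc : Set.uIcc (0:ℝ) 1 = I := Set.uIcc_of_le (by norm_num)
  have := intervalIntegral.integral_eq_sub_of_hasDerivAt
    (f := F) (by rw [huIcc]; exact hderiv) hInt
  rw [this, hF]
  ring
end

section
/- Let q : ℝ → ℝ be continuous on [0,1] and α, β, γ ∈ ℝ with sin(β − γ) ≠ 0. For i ∈ {1,2} and n ∈ ℕ, let λ_{i,n} ∈ ℝ, with n ↦ λ_{1,n} and n ↦ λ_{2,n} injective, and let g_{i,n} : ℝ → ℝ be twice continuously differentiable, not identically zero on [0,1], satisfying −g_{i,n}'' + q g_{i,n} = λ_{i,n} g_{i,n} on [0,1], ∫₀¹ g_{i,n}² = 1, the boundary condition g_{i,n}(0)cos α + g_{i,n}'(0)sin α = 0 at 0, and at 1 the condition g_{1,n}(1)cos β + g_{1,n}'(1)sin β = 0 for i = 1 and g_{2,n}(1)cos γ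 + g_{2,n}'(1)sin γ = 0 for i = 2. Then the family of squared eigenfunctions { g_{i,n}² : (i,n) ∈ {1,2} × ℕ } is linearly independent: for every finite set F ⊆ {1,2} × ℕ and reals a_{i,n}, if Σ_{(i,n)∈F} a_{i,n} g_{i,n}(x)² = 0 for all x ∈ [0,1], then a_{i,n} = 0 for all (i,n) ∈ F. -/
/-!
Differentiating a vanishing combination `∑ c g²` and using `g'' = (q - λ) g` together with the
common boundary condition at `0` shows that `∑ c λ g²` vanishes as well. So multiplication by the
eigenvalue preserves linear relations among the `g²`, which makes them behave like eigenvectors: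
they are independent as soon as all eigenvalues `λ_{i,n}` are distinct. Within one problem this is
the injectivity of `n ↦ λ_{i,n}`. A common eigenvalue of the two problems would make the Wronskian
of the two eigenfunctions vanish at `1`, which `sin (β - γ) ≠ 0` only allows if one of them has
zero Cauchy data at `1`, hence vanishes identically.
-/

open Set Finset Real

lemma cross_eq_zero_of_boundary {x₁ y₁ x₂ y₂ α : ℝ} (h₁ : x₁ * cos α + y₁ * sin α = 0)
    (h₂ : x₂ * cos α + y₂ * sin α = 0) : x₁ * y₂ - y₁ * x₂ = 0 := by
  have hs : (x₁ * y₂ - y₁ * x₂) * sin α = 0 := by linear_combination x₁ * h₂ - x₂ * h₁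
  have hc : (x₁ * y₂ - y₁ * x₂) * cos α = 0 := by linear_combination y₂ * h₁ - y₁ * h₂
  linear_combination sin α * hs + cos α * hc - (x₁ * y₂ - y₁ * x₂) * sin_sq_add_cos_sq α

lemma eq_sin_mul_of_boundary {x y β : ℝ} (h : x * cos β + y * sin β = 0) :
    x = (x * sin β - y * cos β) * sin β ∧ y = -(x * sin β - y * cos β) * cos β :=
  ⟨by linear_combination cos β * h - x * sin_sq_add_cos_sq β,
    by linear_combination sin β * h - y * sin_sq_add_cos_sq β⟩

/-- Boundary data for the angles `β` and `γ` are multiples of `(sin β, -cos β)` and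
`(sin γ, -cos γ)`, whose cross product is `-sin (β - γ)`. -/
lemma eq_zero_or_eq_zero_of_cross_eq_zero {x₁ y₁ x₂ y₂ β γ : ℝ}
    (h₁ : x₁ * cos β + y₁ * sin β = 0) (h₂ : x₂ * cos γ + y₂ * sin γ = 0)
    (hβγ : sin (β - γ) ≠ 0) (h : x₁ * y₂ - y₁ * x₂ = 0) :
    (x₁ = 0 ∧ y₁ = 0) ∨ (x₂ = 0 ∧ y₂ = 0) := by
  obtain ⟨hx₁, hy₁⟩ := eq_sin_mul_of_boundary h₁
  obtain ⟨hx₂, hy₂⟩ := eq_sin_mul_of_boundary h₂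
  set S := x₁ * sin β - y₁ * cos β
  set T := x₂ * sin γ - y₂ * cos γ
  have hST : S * T * sin (β - γ) = 0 := by
    rw [hx₁, hy₁, hx₂, hy₂] at h
    linear_combination (sin_sub β γ) * S * T - h
  rcases mul_eq_zero.1 ((mul_eq_zero.1 hST).resolve_right hβγ) with hS | hT
  · exact .inl ⟨by rw [hx₁, hS, zero_mul], by rw [hy₁, hS]; ring⟩
  · exact .inr ⟨by rw [hx₂, hT, zero_mul], by rw [hy₂, hT]; ring⟩

/-- `sin α ^ 2 * ∑ c y² = cos α ^ 2 * ∑ c x²`, and if `sin α = 0` all `x i` vanish. -/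
lemma sum_mul_sq_eq_zero_of_boundary {ι : Type*} {F : Finset ι} {x y c d : ι → ℝ} {α : ℝ}
    (hbc : ∀ i ∈ F, x i * cos α + y i * sin α = 0) (hx : ∑ i ∈ F, c i * x i ^ 2 = 0)
    (hxy : ∑ i ∈ F, c i * y i ^ 2 = ∑ i ∈ F, d i * x i ^ 2) :
    ∑ i ∈ F, d i * x i ^ 2 = 0 := by
  by_cases hα : sin α = 0
  · have hcos : cos α ≠ 0 := fun h ↦ by simpa [hα, h] using sin_sq_add_cos_sq α
    refine sum_eq_zero fun i hi ↦ ?_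
    have := hbc i hi
    rw [hα, mul_zero, add_zero] at this
    simp [(mul_eq_zero.1 this).resolve_right hcos]
  · have : sin α ^ 2 * ∑ i ∈ F, c i * y i ^ 2 = cos α ^ 2 * ∑ i ∈ F, c i * x i ^ 2 := by
      simp only [mul_sum]
      refine sum_congr rfl fun i hi ↦ ?_
      linear_combination c i * (y i * sin α - x i * cos α) * hbc i hi
    rw [← hxy]
    simpa [hx, hα] using this

lemma eqOn_of_hasDerivAt_of_eqOn {a b : ℝ} (hab : a < b) {f g f' g' : ℝ → ℝ}
    (hf : ∀ x ∈ Icc a b, HasDerivAt f (f' x) x) (hg : ∀ x ∈ Icc a b, HasDerivAt g (g' x) x)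
    (h : EqOn f g (Icc a b)) : EqOn f' g' (Icc a b) := fun x hx ↦
  (uniqueDiffOn_Icc hab x hx).eq_deriv _ (hf x hx).hasDerivWithinAt
    ((hg x hx).hasDerivWithinAt.congr h (h hx))

/-- A minimal nontrivial relation `∑ c j • v j` involving `i` would yield the shorter relation
`∑ (c j * (μ j - μ i)) • v j`. -/
theorem linearIndepOn_of_relations_mul_stable {ι K M : Type*} [Field K] [AddCommGroup M]
    [Module K M] {s : Set ι} {v : ι → M} {μ : ι → K} (hμ : InjOn μ s) (hv : ∀ i ∈ s, v i ≠ 0)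
    (hmul : ∀ (t : Finset ι) (c : ι → K), (t : Set ι) ⊆ s →
      ∑ i ∈ t, c i • v i = 0 → ∑ i ∈ t, (c i * μ i) • v i = 0) :
    LinearIndepOn K v s := by
  classical
  rw [linearIndepOn_iff']
  intro t
  induction t using Finset.strongInduction with
  | H t ih =>
    intro c hts hc i hi
    have hrest : ∀ j ∈ t.erase i, c j = 0 := by
      intro j hj
      have hrel : ∑ k ∈ t.erase i, (c k * (μ k - μ i)) • v k = 0 := by
        rw [sum_erase t (by simp)]
        calc ∑ k ∈ t, (c k * (μ k - μ i)) • v k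
            = ∑ k ∈ t, (c k * μ k) • v k - μ i • ∑ k ∈ t, c k • v k := by
              rw [smul_sum, ← sum_sub_distrib]
              exact sum_congr rfl fun k _ ↦ by module
          _ = 0 := by rw [hmul t c hts hc, hc, smul_zero, sub_zero]
      have hsub : (↑(t.erase i) : Set ι) ⊆ s := (coe_subset.2 (erase_subset i t)).trans hts
      refine (mul_eq_zero.1 (ih _ (erase_ssubset hi) _ hsub hrel j hj)).resolve_right ?_
      exact sub_ne_zero.2 fun h ↦ ne_of_mem_erase hj (hμ (hsub hj) (hts hi) h)
    rw [← sum_erase_add t _ hi, sum_eq_zero fun j hj ↦ by rw [hrest j hj, zero_smul],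
      zero_add] at hc
    exact (smul_eq_zero.1 hc).resolve_right (hv i (hts hi))

lemma sum_smul_domRestrict_eq_zero_iff {ι : Type*} (t : Finset ι) (c : ι → ℝ) (f : ι → ℝ → ℝ)
    (s : Set ℝ) : ∑ i ∈ t, c i • s.domRestrict (f i) = 0 ↔ ∀ x ∈ s, ∑ i ∈ t, c i * f i x = 0 := by
  simp [funext_iff, Finset.sum_apply, Set.domRestrict]

def SolvesSturmLiouville (q : ℝ → ℝ) (μ : ℝ) (s : Set ℝ) (u u' : ℝ → ℝ) : Prop :=
  ∀ x ∈ s, HasDerivAt u (u' x) x ∧ HasDerivAt u' ((q x - μ) * u x) x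

namespace SolvesSturmLiouville

section Single

variable {q : ℝ → ℝ} {μ x a b : ℝ} {s : Set ℝ} {u u' v v' : ℝ → ℝ}

lemma hasDerivAt_sq (hu : SolvesSturmLiouville q μ s u u') (hx : x ∈ s) :
    HasDerivAt (fun y ↦ u y ^ 2) (2 * (u x * u' x)) x :=
  ((hu x hx).1.pow 2).congr_deriv (by ring)

lemma hasDerivAt_mul_deriv (hu : SolvesSturmLiouville q μ s u u') (hx : x ∈ s) :
    HasDerivAt (fun y ↦ u y * u' y) (u' x ^ 2 + (q x - μ) * u x ^ 2) x :=
  ((hu x hx).1.mul (hu x hx).2).congr_deriv (by ring)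

lemma hasDerivAt_deriv_sq (hu : SolvesSturmLiouville q μ s u u') (hx : x ∈ s) :
    HasDerivAt (fun y ↦ u' y ^ 2) (2 * ((q x - μ) * (u x * u' x))) x :=
  ((hu x hx).2.pow 2).congr_deriv (by ring)

/-- The first-order system `(u, u')' = (u', (q - μ) u)` is Lipschitz in `(u, u')` with constant
`max 1 (sup |q - μ|)`, so Cauchy data at `b` determine the solution. -/
theorem eqOn_zero_of_right (hq : ContinuousOn q (Icc a b))
    (hu : SolvesSturmLiouville q μ (Icc a b) u u') (hb : u b = 0) (hb' : u' b = 0) :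
    EqOn u 0 (Icc a b) := by
  obtain ⟨C, hC⟩ := isCompact_Icc.exists_bound_of_continuousOn
    (hq.sub (continuousOn_const (c := μ)))
  set v : ℝ → ℝ × ℝ → ℝ × ℝ := fun t z ↦ (z.2, (q t - μ) * z.1)
  have hlip : ∀ t ∈ Ioc a b, LipschitzOnWith (max 1 C.toNNReal) (v t) univ := by
    intro t ht
    have hqt : ‖q t - μ‖₊ * 1 ≤ C.toNNReal := by
      rw [mul_one, ← NNReal.coe_le_coe, coe_nnnorm, Real.coe_toNNReal']
      exact (hC t (Ioc_subset_Icc_self ht)).trans (le_max_left _ _)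
    exact (LipschitzWith.prod_snd.prodMk
      (((lipschitzWith_smul (q t - μ)).comp LipschitzWith.prod_fst).weaken hqt)).lipschitzOnWith
  have hsol : ∀ t ∈ Ioc a b, HasDerivWithinAt (fun t ↦ (u t, u' t)) (v t (u t, u' t)) (Iic t) t :=
    fun t ht ↦ ((hu t (Ioc_subset_Icc_self ht)).1.prodMk
      (hu t (Ioc_subset_Icc_self ht)).2).hasDerivWithinAt
  have hzero : ∀ t ∈ Ioc a b, HasDerivWithinAt (fun _ ↦ (0 : ℝ × ℝ)) (v t 0) (Iic t) t :=
    fun t _ ↦ by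
      rw [show v t 0 = 0 by ext <;> simp [v]]
      exact hasDerivWithinAt_const t (Iic t) 0
  have := ODE_solution_unique_of_mem_Icc_left hlip
    (fun t ht ↦ ((hu t ht).1.prodMk (hu t ht).2).continuousAt.continuousWithinAt) hsol
    (fun _ _ ↦ mem_univ _) continuousOn_const hzero (fun _ _ ↦ mem_univ _) (by simp [hb, hb'])
  exact fun x hx ↦ congrArg Prod.fst (this hx)

lemma wronskian_eq (hab : a ≤ b) (hu : SolvesSturmLiouville q μ (Icc a b) u u')
    (hv : SolvesSturmLiouville q μ (Icc a b) v v') :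
    u b * v' b - u' b * v b = u a * v' a - u' a * v a := by
  have hW : ∀ x ∈ Icc a b, HasDerivAt (fun y ↦ u y * v' y - u' y * v y) 0 x := fun x hx ↦
    (((hu x hx).1.mul (hv x hx).2).sub ((hu x hx).2.mul (hv x hx).1)).congr_deriv (by ring)
  exact constant_of_has_deriv_right_zero
    (fun x hx ↦ (hW x hx).continuousAt.continuousWithinAt)
    (fun x hx ↦ (hW x (Ico_subset_Icc_self hx)).hasDerivWithinAt) b ⟨hab, le_rfl⟩

theorem eigenvalue_ne (hq : ContinuousOn q (Icc a b)) {ν α β γ : ℝ}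
    (hu : SolvesSturmLiouville q μ (Icc a b) u u') (hv : SolvesSturmLiouville q ν (Icc a b) v v')
    (hua : u a * cos α + u' a * sin α = 0) (hva : v a * cos α + v' a * sin α = 0)
    (hub : u b * cos β + u' b * sin β = 0) (hvb : v b * cos γ + v' b * sin γ = 0)
    (hβγ : sin (β - γ) ≠ 0) (hu₀ : ∃ x ∈ Icc a b, u x ≠ 0) (hv₀ : ∃ x ∈ Icc a b, v x ≠ 0) :
    μ ≠ ν := by
  rintro rfl
  obtain ⟨x, hx, hux⟩ := hu₀
  obtain ⟨y, hy, hvy⟩ := hv₀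
  have hW : u b * v' b - u' b * v b = 0 := by
    rw [wronskian_eq (hx.1.trans hx.2) hu hv]
    exact cross_eq_zero_of_boundary hua hva
  rcases eq_zero_or_eq_zero_of_cross_eq_zero hub hvb hβγ hW with ⟨h, h'⟩ | ⟨h, h'⟩
  · exact hux (hu.eqOn_zero_of_right hq h h' hx)
  · exact hvy (hv.eqOn_zero_of_right hq h h' hy)

end Single

section Family

variable {ι : Type*} {F : Finset ι} {q : ℝ → ℝ} {a b x : ℝ} {s : Set ℝ} {u u' : ι → ℝ → ℝ}
  {μ : ι → ℝ}

lemma hasDerivAt_sum_sq (hs : ∀ i ∈ F, SolvesSturmLiouville q (μ i) s (u i) (u' i))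
    (c : ι → ℝ) (hx : x ∈ s) :
    HasDerivAt (fun y ↦ ∑ i ∈ F, c i * u i y ^ 2) (2 * ∑ i ∈ F, c i * (u i x * u' i x)) x := by
  refine (HasDerivAt.fun_sum fun i hi ↦ ((hs i hi).hasDerivAt_sq hx).const_mul (c i)).congr_deriv ?_
  rw [mul_sum]
  exact sum_congr rfl fun i _ ↦ by ring

lemma hasDerivAt_sum_mul_deriv
    (hs : ∀ i ∈ F, SolvesSturmLiouville q (μ i) s (u i) (u' i))
    (c : ι → ℝ) (hx : x ∈ s) :
    HasDerivAt (fun y ↦ ∑ i ∈ F, c i * (u i y * u' i y))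
      (∑ i ∈ F, c i * u' i x ^ 2 + q x * ∑ i ∈ F, c i * u i x ^ 2
        - ∑ i ∈ F, c i * μ i * u i x ^ 2) x := by
  refine (HasDerivAt.fun_sum fun i hi ↦
    ((hs i hi).hasDerivAt_mul_deriv hx).const_mul (c i)).congr_deriv ?_
  rw [mul_sum, ← sum_add_distrib, ← sum_sub_distrib]
  exact sum_congr rfl fun i _ ↦ by ring

lemma hasDerivAt_sum_deriv_sq
    (hs : ∀ i ∈ F, SolvesSturmLiouville q (μ i) s (u i) (u' i))
    (c : ι → ℝ) (hx : x ∈ s) :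
    HasDerivAt (fun y ↦ ∑ i ∈ F, c i * u' i y ^ 2)
      (2 * (q x * ∑ i ∈ F, c i * (u i x * u' i x) - ∑ i ∈ F, c i * μ i * (u i x * u' i x))) x := by
  refine (HasDerivAt.fun_sum fun i hi ↦
    ((hs i hi).hasDerivAt_deriv_sq hx).const_mul (c i)).congr_deriv ?_
  rw [mul_sum, ← sum_sub_distrib, mul_sum]
  exact sum_congr rfl fun i _ ↦ by ring

theorem sum_mul_eigenvalue_mul_sq_eq_zero (hab : a < b) {α : ℝ}
    (hs : ∀ i ∈ F, SolvesSturmLiouville q (μ i) (Icc a b) (u i) (u' i))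
    (hbc : ∀ i ∈ F, u i a * cos α + u' i a * sin α = 0) {c : ι → ℝ}
    (hc : ∀ x ∈ Icc a b, ∑ i ∈ F, c i * u i x ^ 2 = 0) :
    ∀ x ∈ Icc a b, ∑ i ∈ F, c i * μ i * u i x ^ 2 = 0 := by
  have hB : ∀ x ∈ Icc a b, ∑ i ∈ F, c i * (u i x * u' i x) = 0 := fun x hx ↦ by
    simpa using eqOn_of_hasDerivAt_of_eqOn hab (fun x hx ↦ hasDerivAt_sum_sq hs c hx)
      (fun x _ ↦ hasDerivAt_const x 0) hc hx
  have hC : ∀ x ∈ Icc a b, ∑ i ∈ F, c i * u' i x ^ 2 = ∑ i ∈ F, c i * μ i * u i x ^ 2 :=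
    fun x hx ↦ by
      have := eqOn_of_hasDerivAt_of_eqOn hab (fun x hx ↦ hasDerivAt_sum_mul_deriv hs c hx)
        (fun x _ ↦ hasDerivAt_const x 0) hB hx
      simp only [hc x hx, mul_zero, add_zero] at this
      linarith
  have hBμ : ∀ x ∈ Icc a b, ∑ i ∈ F, c i * μ i * (u i x * u' i x) = 0 := fun x hx ↦ by
    have := eqOn_of_hasDerivAt_of_eqOn hab (fun x hx ↦ hasDerivAt_sum_deriv_sq hs c hx)
      (fun x hx ↦ hasDerivAt_sum_sq hs (fun i ↦ c i * μ i) hx) hC hx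
    simp only [hB x hx, mul_zero, zero_sub] at this
    linarith
  have hconst : ∀ x ∈ Icc a b, ∑ i ∈ F, c i * μ i * u i x ^ 2 = ∑ i ∈ F, c i * μ i * u i a ^ 2 :=
    constant_of_has_deriv_right_zero
      (fun x hx ↦ (hasDerivAt_sum_sq hs _ hx).continuousAt.continuousWithinAt)
      fun x hx ↦ ((hasDerivAt_sum_sq hs (fun i ↦ c i * μ i) (Ico_subset_Icc_self hx)).congr_deriv
        (by simp only [hBμ x (Ico_subset_Icc_self hx), mul_zero])).hasDerivWithinAt
  have ha : a ∈ Icc a b := left_mem_Icc.2 hab.le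
  intro x hx
  rw [hconst x hx]
  exact sum_mul_sq_eq_zero_of_boundary hbc (hc a ha) (hC a ha)

end Family

end SolvesSturmLiouville

theorem squared_eigenfunctions_linearly_independent_general
    (q : ℝ → ℝ) (hq : ContinuousOn q (Set.Icc (0:ℝ) 1))
    (α β γ : ℝ) (hβγ : Real.sin (β - γ) ≠ 0)
    (lam : ℕ → ℕ → ℝ)
    (hinj1 : Function.Injective (lam 1)) (hinj2 : Function.Injective (lam 2))
    (g g' g'' : ℕ → ℕ → ℝ → ℝ)
    (hg : ∀ i ∈ ({1, 2} : Set ℕ), ∀ n : ℕ, ∀ x ∈ Set.Icc (0:ℝ) 1,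
      HasDerivAt (g i n) (g' i n x) x ∧ HasDerivAt (g' i n) (g'' i n x) x)
    (hne : ∀ i ∈ ({1, 2} : Set ℕ), ∀ n : ℕ, ∃ x ∈ Set.Icc (0:ℝ) 1, g i n x ≠ 0)
    (heq : ∀ i ∈ ({1, 2} : Set ℕ), ∀ n : ℕ, ∀ x ∈ Set.Icc (0:ℝ) 1,
      -g'' i n x + q x * g i n x = lam i n * g i n x)
    (hbc0 : ∀ i ∈ ({1, 2} : Set ℕ), ∀ n : ℕ,
      g i n 0 * Real.cos α + g' i n 0 * Real.sin α = 0)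
    (hbc1β : ∀ n : ℕ, g 1 n 1 * Real.cos β + g' 1 n 1 * Real.sin β = 0)
    (hbc1γ : ∀ n : ℕ, g 2 n 1 * Real.cos γ + g' 2 n 1 * Real.sin γ = 0) :
    ∀ F : Finset (ℕ × ℕ), (∀ p ∈ F, p.1 ∈ ({1, 2} : Set ℕ)) →
      ∀ a : ℕ × ℕ → ℝ,
        (∀ x ∈ Set.Icc (0:ℝ) 1, ∑ p ∈ F, a p * (g p.1 p.2 x)^2 = 0) →
        ∀ p ∈ F, a p = 0 := by
  have hsol : ∀ i ∈ ({1, 2} : Set ℕ), ∀ n,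
      SolvesSturmLiouville q (lam i n) (Icc 0 1) (g i n) (g' i n) := fun i hi n x hx ↦
    ⟨(hg i hi n x hx).1, (hg i hi n x hx).2.congr_deriv (by linear_combination -heq i hi n x hx)⟩
  have h₁ : 1 ∈ ({1, 2} : Set ℕ) := by simp
  have h₂ : 2 ∈ ({1, 2} : Set ℕ) := by simp
  have hne12 : ∀ n m, lam 1 n ≠ lam 2 m := fun n m ↦
    (hsol 1 h₁ n).eigenvalue_ne hq (hsol 2 h₂ m) (hbc0 1 h₁ n) (hbc0 2 h₂ m) (hbc1β n) (hbc1γ m)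
      hβγ (hne 1 h₁ n) (hne 2 h₂ m)
  have hinj : InjOn (fun p : ℕ × ℕ ↦ lam p.1 p.2) {p | p.1 ∈ ({1, 2} : Set ℕ)} := by
    rintro ⟨i, n⟩ hi ⟨j, m⟩ hj h
    simp only [mem_ofPred_eq, mem_insert_iff, mem_singleton_iff] at hi hj h
    rcases hi with rfl | rfl <;> rcases hj with rfl | rfl
    exacts [by rw [hinj1 h], (hne12 n m h).elim, (hne12 m n h.symm).elim, by rw [hinj2 h]]
  have hlin : LinearIndepOn ℝ (fun p : ℕ × ℕ ↦ (Icc (0:ℝ) 1).domRestrict (g p.1 p.2 · ^ 2))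
      {p | p.1 ∈ ({1, 2} : Set ℕ)} := by
    refine linearIndepOn_of_relations_mul_stable hinj (fun p hp h ↦ ?_) fun t c hts hc ↦ ?_
    · obtain ⟨x, hx, hgx⟩ := hne p.1 hp p.2
      exact hgx (pow_eq_zero_iff two_ne_zero |>.1 (congrFun h ⟨x, hx⟩))
    · rw [sum_smul_domRestrict_eq_zero_iff] at hc ⊢
      exact SolvesSturmLiouville.sum_mul_eigenvalue_mul_sq_eq_zero zero_lt_one
        (fun p hp ↦ hsol p.1 (hts hp) p.2) (fun p hp ↦ hbc0 p.1 (hts hp) p.2) hc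
  intro F hF a ha
  exact linearIndepOn_iff'.1 hlin F a hF ((sum_smul_domRestrict_eq_zero_iff F a _ _).2 ha)

/-- The squared `L²`-normalized eigenfunctions `g_{i,n}²` of the two Sturm–Liouville
boundary value problems (angles `(α,β)` for `i = 1` and `(α,γ)` for `i = 2`, with
`sin(β − γ) ≠ 0`) are linearly independent: any finite linear combination vanishing
identically on `[0,1]` has all coefficients zero. -/
theorem squared_eigenfunctions_linearly_independent
    (q : ℝ → ℝ) (hq : ContinuousOn q (Set.Icc (0:ℝ) 1))
    (α β γ : ℝ) (hβγ : Real.sin (β - γ) ≠ 0)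
    (lam : ℕ → ℕ → ℝ)
    (hinj1 : Function.Injective (lam 1)) (hinj2 : Function.Injective (lam 2))
    (g g' g'' : ℕ → ℕ → ℝ → ℝ)
    (hg : ∀ i ∈ ({1, 2} : Set ℕ), ∀ n : ℕ, ∀ x ∈ Set.Icc (0:ℝ) 1,
      HasDerivAt (g i n) (g' i n x) x ∧ HasDerivAt (g' i n) (g'' i n x) x)
    (hg'' : ∀ i ∈ ({1, 2} : Set ℕ), ∀ n : ℕ, ContinuousOn (g'' i n) (Set.Icc (0:ℝ) 1))
    (hne : ∀ i ∈ ({1, 2} : Set ℕ), ∀ n : ℕ, ∃ x ∈ Set.Icc (0:ℝ) 1, g i n x ≠ 0)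
    (heq : ∀ i ∈ ({1, 2} : Set ℕ), ∀ n : ℕ, ∀ x ∈ Set.Icc (0:ℝ) 1,
      -g'' i n x + q x * g i n x = lam i n * g i n x)
    (hnorm : ∀ i ∈ ({1, 2} : Set ℕ), ∀ n : ℕ, (∫ x in (0:ℝ)..1, (g i n x)^2) = 1)
    (hbc0 : ∀ i ∈ ({1, 2} : Set ℕ), ∀ n : ℕ,
      g i n 0 * Real.cos α + g' i n 0 * Real.sin α = 0)
    (hbc1β : ∀ n : ℕ, g 1 n 1 * Real.cos β + g' 1 n 1 * Real.sin β = 0)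
    (hbc1γ : ∀ n : ℕ, g 2 n 1 * Real.cos γ + g' 2 n 1 * Real.sin γ = 0) :
    ∀ F : Finset (ℕ × ℕ), (∀ p ∈ F, p.1 ∈ ({1, 2} : Set ℕ)) →
      ∀ a : ℕ × ℕ → ℝ,
        (∀ x ∈ Set.Icc (0:ℝ) 1, ∑ p ∈ F, a p * (g p.1 p.2 x)^2 = 0) →
        ∀ p ∈ F, a p = 0 :=
  squared_eigenfunctions_linearly_independent_general q hq α β γ hβγ lam hinj1 hinj2 g g' g'' hg hne
    heq hbc0 hbc1β hbc1γ
end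

section
/- Let q : ℝ → ℝ be continuous on [0,1] and α, β, γ ∈ ℝ with sin(β − γ) ≠ 0. For i ∈ {1,2} and n ∈ ℕ, let λ_{i,n} ∈ ℝ, with n ↦ λ_{1,n} and n ↦ λ_{2,n} injective, and let g_{i,n} : ℝ → ℝ be twice continuously differentiable, not identically zero on [0,1], satisfying −g_{i,n}'' + q g_{i,n} = λ_{i,n} g_{i,n} on [0,1], ∫₀¹ g_{i,n}² = 1, the boundary condition g_{i,n}(0)cos α + g_{i,n}'(0)sin α = 0 at 0, and at 1 the condition g_{1,n}(1)cos β + g_{1,n}'(1)sin β = 0 for i = 1 and g_{2,n}(1)cos γ + g_{2,n}'(1)sin γ = 0 for i = 2. Then no squared eigenfunction is an H¹-convergent series of the others: there do not exist (i,n) ∈ {1,2} × ℕ, a sequence of indices (jₖ,mₖ) ∈ {1,2} × ℕ with (jₖ,mₖ) ≠ (i,n) for all k, and reals aₖ, such that the partial sums Σ_{k<N} aₖ g_{jₖ,mₖ}² converge to g_{i,n}² as N → ∞ in the H¹ norm ‖f‖_{H¹} = √(∫₀¹ f² + ∫₀¹ f'²). -/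
open Set Filter MeasureTheory Topology

namespace SLProof



/-- The first-order vector field associated to `-y'' + Q y = lam y`. -/
def vf (Q : ℝ → ℝ) (lam : ℝ) : ℝ → ℝ × ℝ → ℝ × ℝ := fun t p => (p.2, (Q t - lam) * p.1)

lemma vf_norm_le {Q : ℝ → ℝ} {lam K : ℝ} (hK1 : 1 ≤ K) (hK : ∀ t, |Q t - lam| ≤ K)
    (t : ℝ) (p : ℝ × ℝ) : ‖vf Q lam t p‖ ≤ K * ‖p‖ := by
  have hp1 : |p.1| ≤ ‖p‖ := by rw [← Real.norm_eq_abs]; exact norm_fst_le p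
  have hp2 : |p.2| ≤ ‖p‖ := by rw [← Real.norm_eq_abs]; exact norm_snd_le p
  have h0 : (0:ℝ) ≤ ‖p‖ := norm_nonneg p
  have h1 : |p.2| ≤ K * ‖p‖ := by nlinarith
  have h2 : |(Q t - lam) * p.1| ≤ K * ‖p‖ := by
    rw [abs_mul]
    have := hK t
    have := abs_nonneg (Q t - lam)
    nlinarith [abs_nonneg p.1]
  rw [Prod.norm_def]
  simp only [vf, Real.norm_eq_abs]
  exact max_le h1 h2

lemma vf_lipschitz {Q : ℝ → ℝ} {lam K : ℝ} (hK1 : 1 ≤ K) (hK : ∀ t, |Q t - lam| ≤ K)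
    (t : ℝ) : LipschitzWith (Real.toNNReal K) (vf Q lam t) := by
  apply LipschitzWith.of_dist_le_mul
  intro p q
  have hsub : vf Q lam t p - vf Q lam t q = vf Q lam t (p - q) := by
    simp only [vf, Prod.mk_sub_mk, Prod.fst_sub, Prod.snd_sub, mul_sub]
  calc dist (vf Q lam t p) (vf Q lam t q) = ‖vf Q lam t (p - q)‖ := by
        rw [dist_eq_norm, hsub]
    _ ≤ K * ‖p - q‖ := vf_norm_le hK1 hK t _
    _ = (Real.toNNReal K : ℝ) * dist p q := by
        rw [dist_eq_norm, Real.coe_toNNReal K (by linarith)]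

lemma ode_unique {Q : ℝ → ℝ} {lam K : ℝ} (hK1 : 1 ≤ K) (hK : ∀ t, |Q t - lam| ≤ K)
    {d d' d'' : ℝ → ℝ}
    (hd : ∀ x ∈ Icc (0:ℝ) 1, HasDerivAt d (d' x) x ∧ HasDerivAt d' (d'' x) x)
    (heq : ∀ x ∈ Icc (0:ℝ) 1, d'' x = (Q x - lam) * d x)
    (h1 : d 1 = 0) (h1' : d' 1 = 0) : ∀ x ∈ Icc (0:ℝ) 1, d x = 0 := by
  have key : EqOn (fun t => (d t, d' t)) (fun _ => ((0:ℝ), (0:ℝ))) (Icc 0 1) := by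
    apply ODE_solution_unique_of_mem_Icc_left
      (v := vf Q lam) (K := Real.toNNReal K) (s := fun _ => (univ : Set (ℝ × ℝ)))
      (fun t _ => ((vf_lipschitz hK1 hK t).lipschitzOnWith))
    · intro x hx
      exact ((hd x hx).1.continuousAt.continuousWithinAt.prodMk
        (hd x hx).2.continuousAt.continuousWithinAt)
    · intro t ht
      have ht' : t ∈ Icc (0:ℝ) 1 := Ioc_subset_Icc_self ht
      have hD : HasDerivAt (fun t => (d t, d' t)) (d' t, d'' t) t :=
        ((hd t ht').1.prodMk (hd t ht').2)
      have h2 : (d' t, d'' t) = vf Q lam t (d t, d' t) := by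
        simp [vf, heq t ht']
      rw [h2] at hD
      exact hD.hasDerivWithinAt
    · intro t _; trivial
    · exact continuousOn_const
    · intro t _
      have hD := (hasDerivAt_const t ((0:ℝ), (0:ℝ))).hasDerivWithinAt (s := Iic t)
      convert hD using 1
      simp [vf]
    · intro t _; trivial
    · simp [h1, h1']
  intro x hx
  have := key hx
  simpa using congrArg Prod.fst this

lemma ode_step {Q : ℝ → ℝ} (hQ : Continuous Q) {lam K : ℝ} (hK1 : 1 ≤ K)
    (hK : ∀ t, |Q t - lam| ≤ K) (s : ℝ) (y : ℝ × ℝ) :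
    ∃ f : ℝ → ℝ × ℝ, f s = y ∧ ∀ t ∈ Icc (s - 1/(2*K)) s,
      HasDerivWithinAt f (vf Q lam t (f t)) (Icc (s - 1/(2*K)) s) t := by
  have hKpos : (0:ℝ) < K := lt_of_lt_of_le one_pos hK1
  have hτ : (0:ℝ) < 1/(2*K) := by positivity
  have hA : (0:ℝ) ≤ ‖y‖ + 1 := by positivity
  have hL : (0:ℝ) ≤ K * (2*‖y‖+1) := by positivity
  have hpl : IsPicardLindelof (vf Q lam) (tmin := s - 1/(2*K)) (tmax := s)
      ⟨s, by constructor <;> linarith⟩ y (Real.toNNReal (‖y‖ + 1)) 0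
      (Real.toNNReal (K * (2*‖y‖+1))) (Real.toNNReal K) :=
    { lipschitzOnWith := fun t _ => ((vf_lipschitz hK1 hK t).lipschitzOnWith)
      continuousOn := fun x _ => by
        apply Continuous.continuousOn
        exact continuous_const.prodMk ((hQ.sub continuous_const).mul continuous_const)
      norm_le := fun t _ x hx => by
        have hxy : ‖x - y‖ ≤ ‖y‖ + 1 := by
          have := mem_closedBall_iff_norm.1 hx
          rwa [Real.coe_toNNReal _ hA] at this
        have hxn : ‖x‖ ≤ 2*‖y‖+1 := by
          have := norm_sub_norm_le x y
          linarith
        rw [Real.coe_toNNReal _ hL]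
        calc ‖vf Q lam t x‖ ≤ K * ‖x‖ := vf_norm_le hK1 hK t x
          _ ≤ K * (2*‖y‖+1) := by nlinarith
      mul_max_le := by
        have hmax : max (s - s) (s - (s - 1/(2*K))) = 1/(2*K) := by
          rw [sub_self, sub_sub_cancel]
          exact max_eq_right (by positivity)
        simp only [Real.coe_toNNReal _ hA, Real.coe_toNNReal _ hL, NNReal.coe_zero, sub_zero]
        rw [hmax]
        have hval : K * (2*‖y‖+1) * (1/(2*K)) = ‖y‖ + 1/2 := by
          field_simp
        rw [hval]
        linarith }
  obtain ⟨f, hf0, hf⟩ := hpl.exists_eq_forall_mem_Icc_hasDerivWithinAt₀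
  exact ⟨f, hf0, hf⟩

lemma ode_chain {Q : ℝ → ℝ} (hQ : Continuous Q) {lam K : ℝ} (hK1 : 1 ≤ K)
    (hK : ∀ t, |Q t - lam| ≤ K) :
    ∀ (k : ℕ) (s : ℝ) (y : ℝ × ℝ), ∃ f : ℝ → ℝ × ℝ, f s = y ∧
      ∀ t ∈ Icc (s - (k+1) * (1/(2*K))) s,
        HasDerivWithinAt f (vf Q lam t (f t)) (Icc (s - (k+1) * (1/(2*K))) s) t := by
  have hKpos : (0:ℝ) < K := lt_of_lt_of_le one_pos hK1
  have hτ : (0:ℝ) < 1/(2*K) := by positivity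
  intro k
  induction k with
  | zero =>
    intro s y
    obtain ⟨f, h0, h⟩ := ode_step hQ hK1 hK s y
    refine ⟨f, h0, ?_⟩
    have : ((0:ℕ):ℝ) + 1 = 1 := by norm_num
    rw [this, one_mul]
    exact h
  | succ k ih =>
    intro s y
    obtain ⟨f, hfs, hf⟩ := ih s y
    set τ := 1/(2*K) with hτdef
    set m := s - ((k:ℝ)+1) * τ with hm
    have hms : m ≤ s := by
      have : (0:ℝ) ≤ ((k:ℝ)+1) * τ := by positivity
      simp only [hm]; linarith
    obtain ⟨φ, hφm, hφ⟩ := ode_step hQ hK1 hK m (f m)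
    refine ⟨fun t => if t < m then φ t else f t, ?_, ?_⟩
    · simp [not_lt.2 hms, hfs]
    · have hdom : s - ((↑(k+1):ℝ) + 1) * τ = m - τ := by
        simp only [hm]; push_cast; ring
      rw [hdom]
      intro t ht
      have hmτ : m - τ ≤ m := by linarith
      have hsplit : Icc (m - τ) s = Icc (m - τ) m ∪ Icc m s :=
        (Icc_union_Icc_eq_Icc hmτ hms).symm
      have hFφ : EqOn (fun t => if t < m then φ t else f t) φ (Icc (m - τ) m) := by
        intro z hz
        by_cases h : z < m
        · simp [h]
        · have hz' : z = m := le_antisymm hz.2 (not_lt.1 h)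
          simp [hz', hφm]
      have hFf : EqOn (fun t => if t < m then φ t else f t) f (Icc m s) := by
        intro z hz
        simp [not_lt.2 hz.1]
      have ht' : t ∈ Icc (m - τ) m ∪ Icc m s := by rw [← hsplit]; exact ht
      have hleft : HasDerivWithinAt (fun t => if t < m then φ t else f t)
          (vf Q lam t ((fun t => if t < m then φ t else f t) t)) (Icc (m - τ) m) t := by
        by_cases hmem : t ∈ Icc (m - τ) m
        · have hcongr := (hφ t hmem).congr hFφ (hFφ hmem)
          have : vf Q lam t ((fun t => if t < m then φ t else f t) t) = vf Q lam t (φ t) :=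
            congrArg _ (hFφ hmem)
          rw [this]
          exact hcongr
        · exact hasDerivWithinAt_iff_hasFDerivWithinAt.2
            (HasFDerivWithinAt.of_notMem_closure (by rwa [closure_Icc]))
      have hright : HasDerivWithinAt (fun t => if t < m then φ t else f t)
          (vf Q lam t ((fun t => if t < m then φ t else f t) t)) (Icc m s) t := by
        by_cases hmem : t ∈ Icc m s
        · have hmem' : t ∈ Icc (s - ((k:ℝ)+1) * τ) s := by
            rw [← hm]; exact hmem
          have hcongr := ((hf t hmem').mono (by rw [hm])).congr hFf (hFf hmem)
          have : vf Q lam t ((fun t => if t < m then φ t else f t) t) = vf Q lam t (f t) :=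
            congrArg _ (hFf hmem)
          rw [this]
          exact hcongr
        · exact hasDerivWithinAt_iff_hasFDerivWithinAt.2
            (HasFDerivWithinAt.of_notMem_closure (by rwa [closure_Icc]))
      have := hleft.union hright
      rw [← hsplit] at this
      exact this

lemma ode_exist {Q : ℝ → ℝ} (hQ : Continuous Q) {lam K : ℝ} (hK1 : 1 ≤ K)
    (hK : ∀ t, |Q t - lam| ≤ K) (y : ℝ × ℝ) :
    ∃ v vd : ℝ → ℝ, v 1 = y.1 ∧ vd 1 = y.2 ∧
      ∀ x ∈ Icc (0:ℝ) 1, HasDerivWithinAt v (vd x) (Icc (0:ℝ) 1) x ∧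
        HasDerivWithinAt vd ((Q x - lam) * v x) (Icc (0:ℝ) 1) x := by
  have hKpos : (0:ℝ) < K := lt_of_lt_of_le one_pos hK1
  obtain ⟨k, hk⟩ := exists_nat_ge (2*K)
  obtain ⟨f, hf1, hf⟩ := ode_chain hQ hK1 hK k 1 y
  have hsub : Icc (0:ℝ) 1 ⊆ Icc (1 - ((k:ℝ)+1) * (1/(2*K))) 1 := by
    apply Icc_subset_Icc _ le_rfl
    have h2K : (0:ℝ) < 2*K := by linarith
    have : (1:ℝ) ≤ ((k:ℝ)+1) * (1/(2*K)) := by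
      rw [mul_one_div, le_div_iff₀ h2K]
      linarith
    linarith
  refine ⟨fun x => (f x).1, fun x => (f x).2, congrArg Prod.fst hf1, congrArg Prod.snd hf1, ?_⟩
  intro x hx
  have hfx := (hf x (hsub hx)).mono hsub
  constructor
  · have := (ContinuousLinearMap.fst ℝ ℝ ℝ).hasFDerivAt.comp_hasDerivWithinAt x hfx
    simp [vf, Function.comp] at this; exact this
  · have := (ContinuousLinearMap.snd ℝ ℝ ℝ).hasFDerivAt.comp_hasDerivWithinAt x hfx
    simp [vf, Function.comp] at this; exact this




lemma cross_zero {θ a b c d : ℝ} (h1 : a * Real.cos θ + b * Real.sin θ = 0)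
    (h2 : c * Real.cos θ + d * Real.sin θ = 0) : a * d - b * c = 0 := by
  have hs := Real.sin_sq_add_cos_sq θ
  linear_combination Real.cos θ * d * h1 - Real.cos θ * b * h2 + Real.sin θ * a * h2
    - Real.sin θ * c * h1 - (a*d - b*c) * hs

lemma two_bc {θ₁ θ₂ A B : ℝ} (h1 : A * Real.cos θ₁ + B * Real.sin θ₁ = 0)
    (h2 : A * Real.cos θ₂ + B * Real.sin θ₂ = 0) (h : Real.sin (θ₁ - θ₂) ≠ 0) :
    A = 0 ∧ B = 0 := by
  have hs : Real.sin (θ₁ - θ₂) =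
      Real.sin θ₁ * Real.cos θ₂ - Real.cos θ₁ * Real.sin θ₂ := Real.sin_sub θ₁ θ₂
  constructor
  · have hA : A * Real.sin (θ₁ - θ₂) = 0 := by
      rw [hs]; linear_combination Real.sin θ₁ * h2 - Real.sin θ₂ * h1
    exact (mul_eq_zero.1 hA).resolve_right h
  · have hB : B * Real.sin (θ₁ - θ₂) = 0 := by
      rw [hs]; linear_combination (- Real.cos θ₁) * h2 + Real.cos θ₂ * h1
    exact (mul_eq_zero.1 hB).resolve_right h

lemma int_sq_zero {f : ℝ → ℝ} (h : ∀ x ∈ Icc (0:ℝ) 1, f x = 0) :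
    (∫ x in (0:ℝ)..1, (f x)^2) = 0 := by
  have heq : EqOn (fun x => (f x)^2) (fun _ => (0:ℝ)) (uIcc (0:ℝ) 1) := by
    intro x hx
    rw [uIcc_of_le zero_le_one] at hx
    simp [h x hx]
  rw [intervalIntegral.integral_congr heq]
  simp

lemma amgm {t : ℝ} (ht : 0 < t) (y z : ℝ) : |y * z| ≤ 1/(2*t) * y^2 + t/2 * z^2 := by
  have h1 : 2*t*|y * z| ≤ y^2 + t^2 * z^2 := by
    rw [abs_mul]
    nlinarith [sq_nonneg (|y| - t*|z|), abs_nonneg y, abs_nonneg z, sq_abs y, sq_abs z,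
      mul_nonneg (abs_nonneg y) (abs_nonneg z)]
  have h2 : |y*z| ≤ (y^2 + t^2*z^2)/(2*t) := by
    rw [le_div_iff₀ (by positivity)]
    linarith
  calc |y*z| ≤ (y^2 + t^2*z^2)/(2*t) := h2
    _ = 1/(2*t) * y^2 + t/2 * z^2 := by field_simp

lemma wronskian_const {Q : ℝ → ℝ} {lam : ℝ} {u ud udd v vd vdd : ℝ → ℝ}
    (hu : ∀ x ∈ Icc (0:ℝ) 1, HasDerivWithinAt u (ud x) (Icc (0:ℝ) 1) x ∧
      HasDerivWithinAt ud (udd x) (Icc (0:ℝ) 1) x)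
    (hv : ∀ x ∈ Icc (0:ℝ) 1, HasDerivWithinAt v (vd x) (Icc (0:ℝ) 1) x ∧
      HasDerivWithinAt vd (vdd x) (Icc (0:ℝ) 1) x)
    (hueq : ∀ x ∈ Icc (0:ℝ) 1, udd x = (Q x - lam) * u x)
    (hveq : ∀ x ∈ Icc (0:ℝ) 1, vdd x = (Q x - lam) * v x) :
    ∀ x ∈ Icc (0:ℝ) 1, u x * vd x - ud x * v x = u 0 * vd 0 - ud 0 * v 0 := by
  apply constant_of_has_deriv_right_zero
  · intro x hx
    exact (((hu x hx).1.continuousWithinAt.mul (hv x hx).2.continuousWithinAt).sub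
      ((hu x hx).2.continuousWithinAt.mul (hv x hx).1.continuousWithinAt))
  · intro x hx
    have hx' : x ∈ Icc (0:ℝ) 1 := Ico_subset_Icc_self hx
    have hmem : Icc (0:ℝ) 1 ∈ 𝓝[Ici x] x := by
      rw [mem_nhdsWithin]
      exact ⟨Iio 1, isOpen_Iio, hx.2, fun y hy => ⟨le_trans hx'.1 hy.2, le_of_lt hy.1⟩⟩
    have hW : HasDerivWithinAt (fun y => u y * vd y - ud y * v y)
        ((ud x * vd x + u x * vdd x) - (udd x * v x + ud x * vd x)) (Icc (0:ℝ) 1) x :=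
      ((hu x hx').1.mul (hv x hx').2).sub ((hu x hx').2.mul (hv x hx').1)
    have h0 : (ud x * vd x + u x * vdd x) - (udd x * v x + ud x * vd x) = 0 := by
      rw [hueq x hx', hveq x hx']; ring
    rw [h0] at hW
    exact hW.mono_of_mem_nhdsWithin hmem

lemma biorth {Q : ℝ → ℝ} {lam mu : ℝ} (hne : mu ≠ lam)
    {u ud udd v vd w wd wdd : ℝ → ℝ}
    (hu : ∀ x ∈ Icc (0:ℝ) 1, HasDerivAt u (ud x) x ∧ HasDerivAt ud (udd x) x)
    (hv : ∀ x ∈ Icc (0:ℝ) 1, HasDerivWithinAt v (vd x) (Icc (0:ℝ) 1) x ∧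
      HasDerivWithinAt vd ((Q x - lam) * v x) (Icc (0:ℝ) 1) x)
    (hw : ∀ x ∈ Icc (0:ℝ) 1, HasDerivAt w (wd x) x ∧ HasDerivAt wd (wdd x) x)
    (hueq : ∀ x ∈ Icc (0:ℝ) 1, udd x = (Q x - lam) * u x)
    (hweq : ∀ x ∈ Icc (0:ℝ) 1, wdd x = (Q x - mu) * w x)
    (hF0 : wd 0 * u 0 - w 0 * ud 0 = 0)
    (hF1 : (wd 1 * u 1 - w 1 * ud 1) * (wd 1 * v 1 - w 1 * vd 1) = 0) :
    (∫ x in (0:ℝ)..1, (2 * w x * wd x * (u x * v x) -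
      (w x)^2 * (ud x * v x + u x * vd x))) = 0 := by
  set F : ℝ → ℝ := fun x => (wd x * u x - w x * ud x) * (wd x * v x - w x * vd x) with hF
  have hcu : ContinuousOn u (Icc (0:ℝ) 1) :=
    fun x hx => (hu x hx).1.continuousAt.continuousWithinAt
  have hcud : ContinuousOn ud (Icc (0:ℝ) 1) :=
    fun x hx => (hu x hx).2.continuousAt.continuousWithinAt
  have hcv : ContinuousOn v (Icc (0:ℝ) 1) := fun x hx => (hv x hx).1.continuousWithinAt
  have hcvd : ContinuousOn vd (Icc (0:ℝ) 1) := fun x hx => (hv x hx).2.continuousWithinAt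
  have hcw : ContinuousOn w (Icc (0:ℝ) 1) :=
    fun x hx => (hw x hx).1.continuousAt.continuousWithinAt
  have hcwd : ContinuousOn wd (Icc (0:ℝ) 1) :=
    fun x hx => (hw x hx).2.continuousAt.continuousWithinAt
  have hPc : ContinuousOn (fun x => (2 * w x * wd x * (u x * v x) -
      (w x)^2 * (ud x * v x + u x * vd x))) (Icc (0:ℝ) 1) := by
    apply ContinuousOn.sub
    · exact ((continuousOn_const.mul hcw).mul hcwd).mul (hcu.mul hcv)
    · exact (hcw.pow 2).mul ((hcud.mul hcv).add (hcu.mul hcvd))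
  have hFc : ContinuousOn F (Icc (0:ℝ) 1) := by
    apply ContinuousOn.mul
    · exact (hcwd.mul hcu).sub (hcw.mul hcud)
    · exact (hcwd.mul hcv).sub (hcw.mul hcvd)
  have hder : ∀ x ∈ Ioo (0:ℝ) 1, HasDerivWithinAt F
      ((lam - mu) * (2 * w x * wd x * (u x * v x) -
        (w x)^2 * (ud x * v x + u x * vd x))) (Ioi x) x := by
    intro x hx
    have hx' : x ∈ Icc (0:ℝ) 1 := Ioo_subset_Icc_self hx
    have hN : Icc (0:ℝ) 1 ∈ 𝓝 x := Icc_mem_nhds hx.1 hx.2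
    have Hv : HasDerivAt v (vd x) x := (hv x hx').1.hasDerivAt hN
    have Hvd : HasDerivAt vd ((Q x - lam) * v x) x := (hv x hx').2.hasDerivAt hN
    have HF : HasDerivAt F
        (((wdd x * u x + wd x * ud x) - (wd x * ud x + w x * udd x)) *
            (wd x * v x - w x * vd x) +
          (wd x * u x - w x * ud x) *
            ((wdd x * v x + wd x * vd x) - (wd x * vd x + w x * ((Q x - lam) * v x)))) x :=
      ((((hw x hx').2.mul (hu x hx').1).sub ((hw x hx').1.mul (hu x hx').2)).mul
        (((hw x hx').2.mul Hv).sub ((hw x hx').1.mul Hvd)))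
    have hval : (((wdd x * u x + wd x * ud x) - (wd x * ud x + w x * udd x)) *
            (wd x * v x - w x * vd x) +
          (wd x * u x - w x * ud x) *
            ((wdd x * v x + wd x * vd x) - (wd x * vd x + w x * ((Q x - lam) * v x)))) =
        (lam - mu) * (2 * w x * wd x * (u x * v x) -
          (w x)^2 * (ud x * v x + u x * vd x)) := by
      rw [hueq x hx', hweq x hx']; ring
    rw [hval] at HF
    exact HF.hasDerivWithinAt
  have hPint : IntervalIntegrable (fun x => (2 * w x * wd x * (u x * v x) -
      (w x)^2 * (ud x * v x + u x * vd x))) volume 0 1 :=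
    ContinuousOn.intervalIntegrable (by rwa [uIcc_of_le zero_le_one])
  have hint : IntervalIntegrable (fun x => (lam - mu) * (2 * w x * wd x * (u x * v x) -
      (w x)^2 * (ud x * v x + u x * vd x))) volume 0 1 := hPint.const_mul _
  have hFTC := intervalIntegral.integral_eq_sub_of_hasDeriv_right_of_le zero_le_one hFc hder hint
  rw [intervalIntegral.integral_const_mul] at hFTC
  have hF1' : F 1 = 0 := hF1
  have hF0' : F 0 = 0 := by
    show (wd 0 * u 0 - w 0 * ud 0) * (wd 0 * v 0 - w 0 * vd 0) = 0
    rw [hF0, zero_mul]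
  rw [hF1', hF0', sub_zero] at hFTC
  have hlm : lam - mu ≠ 0 := sub_ne_zero.2 (Ne.symm hne)
  exact (mul_eq_zero.1 hFTC).resolve_left hlm

lemma tendsto_int_mul (f : ℕ → ℝ → ℝ) (h : ℝ → ℝ)
    (hf : ∀ N, ContinuousOn (f N) (Icc (0:ℝ) 1)) (hh : ContinuousOn h (Icc (0:ℝ) 1))
    (hsq : Tendsto (fun N => ∫ x in (0:ℝ)..1, (f N x)^2) atTop (nhds 0)) :
    Tendsto (fun N => ∫ x in (0:ℝ)..1, f N x * h x) atTop (nhds 0) := by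
  have icc : uIcc (0:ℝ) 1 = Icc 0 1 := uIcc_of_le zero_le_one
  have hint : ∀ {g : ℝ → ℝ}, ContinuousOn g (Icc (0:ℝ) 1) →
      IntervalIntegrable g volume 0 1 :=
    fun hg => ContinuousOn.intervalIntegrable (by rwa [icc])
  set H := ∫ x in (0:ℝ)..1, (h x)^2 with hHdef
  have hH0 : 0 ≤ H :=
    intervalIntegral.integral_nonneg zero_le_one fun x _ => sq_nonneg _
  rw [Metric.tendsto_atTop] at hsq ⊢
  intro ε hε
  set t := ε / (H + 1) with htdef
  have htpos : 0 < t := div_pos hε (by linarith)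
  obtain ⟨N₀, hN₀⟩ := hsq (ε * t / 2) (by positivity)
  refine ⟨N₀, fun N hN => ?_⟩
  have hsqN : (∫ x in (0:ℝ)..1, (f N x)^2) < ε * t / 2 := by
    have := hN₀ N hN
    rw [Real.dist_eq, sub_zero] at this
    exact lt_of_le_of_lt (le_abs_self _) this
  have hb : |∫ x in (0:ℝ)..1, f N x * h x| ≤
      (1/(2*t)) * (∫ x in (0:ℝ)..1, (f N x)^2) + (t/2) * H := by
    have h1 : |∫ x in (0:ℝ)..1, f N x * h x| ≤ ∫ x in (0:ℝ)..1, |f N x * h x| :=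
      intervalIntegral.abs_integral_le_integral_abs zero_le_one
    have h2 : (∫ x in (0:ℝ)..1, |f N x * h x|) ≤
        ∫ x in (0:ℝ)..1, ((1/(2*t)) * (f N x)^2 + (t/2) * (h x)^2) := by
      apply intervalIntegral.integral_mono_on zero_le_one
      · exact hint (((hf N).mul hh).abs)
      · exact ((hint ((hf N).pow 2)).const_mul _).add ((hint (hh.pow 2)).const_mul _)
      · intro x _
        exact amgm htpos (f N x) (h x)
    have h3 : (∫ x in (0:ℝ)..1, ((1/(2*t)) * (f N x)^2 + (t/2) * (h x)^2)) =
        (1/(2*t)) * (∫ x in (0:ℝ)..1, (f N x)^2) + (t/2) * H := by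
      rw [intervalIntegral.integral_add (f := fun x => (1/(2*t)) * (f N x)^2)
        (g := fun x => (t/2) * (h x)^2) ((hint ((hf N).pow 2)).const_mul _)
        ((hint (hh.pow 2)).const_mul _), intervalIntegral.integral_const_mul,
        intervalIntegral.integral_const_mul]
    linarith
  rw [Real.dist_eq, sub_zero]
  have hfN0 : 0 ≤ ∫ x in (0:ℝ)..1, (f N x)^2 :=
    intervalIntegral.integral_nonneg zero_le_one fun x _ => sq_nonneg _
  have e1 : (1/(2*t)) * (∫ x in (0:ℝ)..1, (f N x)^2) < (1/(2*t)) * (ε*t/2) :=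
    mul_lt_mul_of_pos_left hsqN (by positivity)
  have e1' : (1/(2*t)) * (ε*t/2) = ε/4 := by field_simp; ring
  have e2 : (t/2) * H ≤ ε/2 := by
    have htε : t * (H+1) = ε := div_mul_cancel₀ _ (by linarith)
    nlinarith
  have : |∫ x in (0:ℝ)..1, f N x * h x| < ε := by
    rw [e1'] at e1
    calc |∫ x in (0:ℝ)..1, f N x * h x| ≤ _ := hb
      _ < ε/4 + ε/2 := by linarith
      _ < ε := by linarith
  exact this




theorem key (Q : ℝ → ℝ) (hQ : Continuous Q) (M : ℝ) (hM : ∀ t, |Q t| ≤ M)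
    (al B Γ : ℝ) (hBΓ : Real.sin (B - Γ) ≠ 0)
    (lam : ℝ) (u ud udd : ℝ → ℝ)
    (hu : ∀ x ∈ Icc (0:ℝ) 1, HasDerivAt u (ud x) x ∧ HasDerivAt ud (udd x) x)
    (hueq : ∀ x ∈ Icc (0:ℝ) 1, udd x = (Q x - lam) * u x)
    (hunorm : (∫ x in (0:ℝ)..1, (u x)^2) = 1)
    (hu0 : u 0 * Real.cos al + ud 0 * Real.sin al = 0)
    (hu1 : u 1 * Real.cos B + ud 1 * Real.sin B = 0)
    (mu : ℕ → ℝ) (w wd wdd : ℕ → ℝ → ℝ)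
    (hw : ∀ k, ∀ x ∈ Icc (0:ℝ) 1, HasDerivAt (w k) (wd k x) x ∧
      HasDerivAt (wd k) (wdd k x) x)
    (hweq : ∀ k, ∀ x ∈ Icc (0:ℝ) 1, wdd k x = (Q x - mu k) * w k x)
    (hwnorm : ∀ k, (∫ x in (0:ℝ)..1, (w k x)^2) = 1)
    (hw0 : ∀ k, w k 0 * Real.cos al + wd k 0 * Real.sin al = 0)
    (hw1 : ∀ k, (w k 1 * Real.cos B + wd k 1 * Real.sin B = 0 ∧ mu k ≠ lam) ∨
      w k 1 * Real.cos Γ + wd k 1 * Real.sin Γ = 0)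
    (a : ℕ → ℝ)
    (htend : Tendsto (fun N : ℕ => Real.sqrt
        ((∫ x in (0:ℝ)..1, ((∑ k ∈ Finset.range N, a k * (w k x)^2) - (u x)^2)^2) +
          ∫ x in (0:ℝ)..1, ((∑ k ∈ Finset.range N,
            a k * (2 * w k x * wd k x)) - 2 * u x * ud x)^2))
      atTop (𝓝 0)) : False := by
  have hM0 : (0:ℝ) ≤ M := le_trans (abs_nonneg _) (hM 0)
  set K := max 1 (M + |lam|) with hKdef
  have hK1 : (1:ℝ) ≤ K := le_max_left _ _
  have hK : ∀ t, |Q t - lam| ≤ K := by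
    intro t
    have h1 : |Q t - lam| ≤ |Q t| + |lam| := by
      rw [sub_eq_add_neg]
      calc |Q t + -lam| ≤ |Q t| + |-lam| := abs_add_le _ _
        _ = |Q t| + |lam| := by rw [abs_neg]
    have h2 : |Q t| + |lam| ≤ M + |lam| := by linarith [hM t]
    exact le_trans (le_trans h1 h2) (le_max_right _ _)
  -- u does not vanish to second order at 1
  have huzero : ¬ (u 1 = 0 ∧ ud 1 = 0) := by
    rintro ⟨h1, h2⟩
    have hz := ode_unique hK1 hK hu hueq h1 h2
    have h0 := int_sq_zero hz
    rw [hunorm] at h0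
    norm_num at h0
  -- construct the auxiliary solution with the other boundary condition at 1
  obtain ⟨v, vd, hv1, hvd1, hv⟩ := ode_exist hQ hK1 hK (-Real.sin Γ, Real.cos Γ)
  simp only at hv1 hvd1
  set W1 := u 1 * Real.cos Γ + ud 1 * Real.sin Γ with hW1def
  have hW1 : W1 ≠ 0 := fun h0 => huzero (two_bc hu1 h0 hBΓ)
  have hu' : ∀ x ∈ Icc (0:ℝ) 1, HasDerivWithinAt u (ud x) (Icc (0:ℝ) 1) x ∧
      HasDerivWithinAt ud (udd x) (Icc (0:ℝ) 1) x :=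
    fun x hx => ⟨(hu x hx).1.hasDerivWithinAt, (hu x hx).2.hasDerivWithinAt⟩
  -- the Wronskian of u and v is constant, equal to W1
  have hWc : ∀ x ∈ Icc (0:ℝ) 1, u x * vd x - ud x * v x = W1 := by
    have h := wronskian_const (Q := Q) (lam := lam) (vdd := fun x => (Q x - lam) * v x)
      hu' hv hueq (fun x _ => rfl)
    have h1 := h 1 (by norm_num)
    intro x hx
    rw [h x hx, ← h1, hv1, hvd1, hW1def]
    ring
  -- continuity facts
  have icc : uIcc (0:ℝ) 1 = Icc 0 1 := uIcc_of_le zero_le_one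
  have hint : ∀ {g : ℝ → ℝ}, ContinuousOn g (Icc (0:ℝ) 1) →
      IntervalIntegrable g volume 0 1 :=
    fun hg => ContinuousOn.intervalIntegrable (by rwa [icc])
  have hcu : ContinuousOn u (Icc (0:ℝ) 1) :=
    fun x hx => (hu x hx).1.continuousAt.continuousWithinAt
  have hcud : ContinuousOn ud (Icc (0:ℝ) 1) :=
    fun x hx => (hu x hx).2.continuousAt.continuousWithinAt
  have hcv : ContinuousOn v (Icc (0:ℝ) 1) := fun x hx => (hv x hx).1.continuousWithinAt
  have hcvd : ContinuousOn vd (Icc (0:ℝ) 1) := fun x hx => (hv x hx).2.continuousWithinAt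
  have hcw : ∀ k, ContinuousOn (w k) (Icc (0:ℝ) 1) :=
    fun k x hx => (hw k x hx).1.continuousAt.continuousWithinAt
  have hcwd : ∀ k, ContinuousOn (wd k) (Icc (0:ℝ) 1) :=
    fun k x hx => (hw k x hx).2.continuousAt.continuousWithinAt
  have hcp : ContinuousOn (fun x => u x * v x) (Icc (0:ℝ) 1) := hcu.mul hcv
  have hcpd : ContinuousOn (fun x => ud x * v x + u x * vd x) (Icc (0:ℝ) 1) :=
    (hcud.mul hcv).add (hcu.mul hcvd)
  -- vanishing of the functional on each w k
  have per_k : ∀ k, (∫ x in (0:ℝ)..1, (2 * w k x * wd k x * (u x * v x) -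
      (w k x)^2 * (ud x * v x + u x * vd x))) = 0 := by
    intro k
    have hF0 : wd k 0 * u 0 - w k 0 * ud 0 = 0 := by
      have := cross_zero (hw0 k) hu0
      linarith
    rcases hw1 k with ⟨hB1, hmune⟩ | hΓ1
    · have hF1 : (wd k 1 * u 1 - w k 1 * ud 1) * (wd k 1 * v 1 - w k 1 * vd 1) = 0 := by
        have h' : wd k 1 * u 1 - w k 1 * ud 1 = 0 := by
          have := cross_zero hB1 hu1
          linarith
        rw [h', zero_mul]
      exact biorth hmune hu hv (hw k) hueq (hweq k) hF0 hF1
    · rcases eq_or_ne (mu k) lam with heqq | hmune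
      · exfalso
        have hwk' : ∀ x ∈ Icc (0:ℝ) 1, HasDerivWithinAt (w k) (wd k x) (Icc (0:ℝ) 1) x ∧
            HasDerivWithinAt (wd k) (wdd k x) (Icc (0:ℝ) 1) x :=
          fun x hx => ⟨(hw k x hx).1.hasDerivWithinAt, (hw k x hx).2.hasDerivWithinAt⟩
        have h2 := wronskian_const (Q := Q) (lam := lam) hwk' hu'
          (fun x hx => by rw [hweq k x hx, heqq]) hueq
        have hc0 : w k 0 * ud 0 - wd k 0 * u 0 = 0 := cross_zero (hw0 k) hu0
        have hc1 : w k 1 * ud 1 - wd k 1 * u 1 = 0 := by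
          rw [h2 1 (by norm_num), hc0]
        have hwk1 : w k 1 = 0 := by
          have hXW : w k 1 * W1 = 0 := by
            rw [hW1def]
            linear_combination u 1 * hΓ1 + Real.sin Γ * hc1
          exact (mul_eq_zero.1 hXW).resolve_right hW1
        have hwdk1 : wd k 1 = 0 := by
          have hXW : wd k 1 * W1 = 0 := by
            rw [hW1def]
            linear_combination ud 1 * hΓ1 + (- Real.cos Γ) * hc1
          exact (mul_eq_zero.1 hXW).resolve_right hW1
        have hKk : ∀ t, |Q t - mu k| ≤ K := fun t => by rw [heqq]; exact hK t
        have hz := ode_unique hK1 hKk (hw k) (hweq k) hwk1 hwdk1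
        have h0 := int_sq_zero hz
        rw [hwnorm k] at h0
        norm_num at h0
      · have hF1 : (wd k 1 * u 1 - w k 1 * ud 1) * (wd k 1 * v 1 - w k 1 * vd 1) = 0 := by
          have hsecond : wd k 1 * v 1 - w k 1 * vd 1 = 0 := by
            rw [hv1, hvd1]
            linear_combination - hΓ1
          rw [hsecond, mul_zero]
        exact biorth hmune hu hv (hw k) hueq (hweq k) hF0 hF1
  -- the functional on u itself
  have hPhiG : (∫ x in (0:ℝ)..1, (2 * u x * ud x * (u x * v x) -
      (u x)^2 * (ud x * v x + u x * vd x))) = - W1 := by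
    have hEq : EqOn (fun x => 2 * u x * ud x * (u x * v x) -
        (u x)^2 * (ud x * v x + u x * vd x)) (fun x => (- W1) * (u x)^2) (uIcc (0:ℝ) 1) := by
      intro x hx
      rw [icc] at hx
      have hWx := hWc x hx
      simp only
      linear_combination (- (u x)^2) * hWx
    rw [intervalIntegral.integral_congr hEq, intervalIntegral.integral_const_mul, hunorm,
      mul_one]
  -- exact value of the approximating functional
  have hcSN : ∀ N : ℕ, ContinuousOn (fun x => ∑ k ∈ Finset.range N, a k * (w k x)^2)
      (Icc (0:ℝ) 1) :=
    fun N => continuousOn_finset_sum _ fun k _ => continuousOn_const.mul ((hcw k).pow 2)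
  have hcDN : ∀ N : ℕ, ContinuousOn
      (fun x => ∑ k ∈ Finset.range N, a k * (2 * w k x * wd k x)) (Icc (0:ℝ) 1) :=
    fun N => continuousOn_finset_sum _ fun k _ =>
      continuousOn_const.mul ((continuousOn_const.mul (hcw k)).mul (hcwd k))
  have hc2uud : ContinuousOn (fun x => 2 * u x * ud x) (Icc (0:ℝ) 1) :=
    (continuousOn_const.mul hcu).mul hcud
  have E1 : ∀ N : ℕ, (∫ x in (0:ℝ)..1, ((∑ k ∈ Finset.range N,
        a k * (2 * w k x * wd k x)) - 2 * u x * ud x) * (u x * v x))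
      - (∫ x in (0:ℝ)..1, ((∑ k ∈ Finset.range N, a k * (w k x)^2) - (u x)^2) *
        (ud x * v x + u x * vd x)) = W1 := by
    intro N
    have hsplit1 : (∫ x in (0:ℝ)..1, ((∑ k ∈ Finset.range N,
          a k * (2 * w k x * wd k x)) - 2 * u x * ud x) * (u x * v x))
        = (∫ x in (0:ℝ)..1, (∑ k ∈ Finset.range N,
            a k * (2 * w k x * wd k x)) * (u x * v x))
          - ∫ x in (0:ℝ)..1, (2 * u x * ud x) * (u x * v x) := by
      rw [intervalIntegral.integral_congr
        (g := fun x => (∑ k ∈ Finset.range N, a k * (2 * w k x * wd k x)) * (u x * v x)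
          - (2 * u x * ud x) * (u x * v x)) (fun x _ => sub_mul _ _ _)]
      exact intervalIntegral.integral_sub (hint ((hcDN N).mul hcp)) (hint (hc2uud.mul hcp))
    have hsplit2 : (∫ x in (0:ℝ)..1, ((∑ k ∈ Finset.range N, a k * (w k x)^2) - (u x)^2) *
          (ud x * v x + u x * vd x))
        = (∫ x in (0:ℝ)..1, (∑ k ∈ Finset.range N, a k * (w k x)^2) *
            (ud x * v x + u x * vd x))
          - ∫ x in (0:ℝ)..1, (u x)^2 * (ud x * v x + u x * vd x) := by
      rw [intervalIntegral.integral_congr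
        (g := fun x => (∑ k ∈ Finset.range N, a k * (w k x)^2) * (ud x * v x + u x * vd x)
          - (u x)^2 * (ud x * v x + u x * vd x)) (fun x _ => sub_mul _ _ _)]
      exact intervalIntegral.integral_sub (hint ((hcSN N).mul hcpd))
        (hint ((hcu.pow 2).mul hcpd))
    have hsum1 : (∫ x in (0:ℝ)..1, (∑ k ∈ Finset.range N,
          a k * (2 * w k x * wd k x)) * (u x * v x))
        = ∑ k ∈ Finset.range N, a k * ∫ x in (0:ℝ)..1,
            2 * w k x * wd k x * (u x * v x) := by
      rw [intervalIntegral.integral_congr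
        (g := fun x => ∑ k ∈ Finset.range N, a k * (2 * w k x * wd k x * (u x * v x)))
        (fun x _ => by rw [Finset.sum_mul]; exact Finset.sum_congr rfl fun k _ => by ring)]
      rw [intervalIntegral.integral_finset_sum
        (f := fun k x => a k * (2 * w k x * wd k x * (u x * v x))) (fun k _ =>
        (hint (((continuousOn_const.mul (hcw k)).mul (hcwd k)).mul hcp)).const_mul (a k))]
      exact Finset.sum_congr rfl fun k _ => intervalIntegral.integral_const_mul _ _
    have hsum2 : (∫ x in (0:ℝ)..1, (∑ k ∈ Finset.range N, a k * (w k x)^2) *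
          (ud x * v x + u x * vd x))
        = ∑ k ∈ Finset.range N, a k * ∫ x in (0:ℝ)..1,
            (w k x)^2 * (ud x * v x + u x * vd x) := by
      rw [intervalIntegral.integral_congr
        (g := fun x => ∑ k ∈ Finset.range N, a k * ((w k x)^2 * (ud x * v x + u x * vd x)))
        (fun x _ => by rw [Finset.sum_mul]; exact Finset.sum_congr rfl fun k _ => by ring)]
      rw [intervalIntegral.integral_finset_sum
        (f := fun k x => a k * ((w k x)^2 * (ud x * v x + u x * vd x))) (fun k _ =>
        (hint (((hcw k).pow 2).mul hcpd)).const_mul (a k))]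
      exact Finset.sum_congr rfl fun k _ => intervalIntegral.integral_const_mul _ _
    have hIk : ∀ k, (∫ x in (0:ℝ)..1, 2 * w k x * wd k x * (u x * v x))
        = ∫ x in (0:ℝ)..1, (w k x)^2 * (ud x * v x + u x * vd x) := by
      intro k
      have hs := intervalIntegral.integral_sub
        (f := fun x => 2 * w k x * wd k x * (u x * v x))
        (g := fun x => (w k x)^2 * (ud x * v x + u x * vd x))
        (hint (((continuousOn_const.mul (hcw k)).mul (hcwd k)).mul hcp))
        (hint (((hcw k).pow 2).mul hcpd))
      have := per_k k
      rw [hs] at this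
      linarith
    have hPhiG' : (∫ x in (0:ℝ)..1, 2 * u x * ud x * (u x * v x))
        - (∫ x in (0:ℝ)..1, (u x)^2 * (ud x * v x + u x * vd x)) = - W1 := by
      have hs := intervalIntegral.integral_sub
        (f := fun x => 2 * u x * ud x * (u x * v x))
        (g := fun x => (u x)^2 * (ud x * v x + u x * vd x))
        (hint ((hc2uud).mul hcp)) (hint ((hcu.pow 2).mul hcpd))
      rw [← hs]
      exact hPhiG
    have hsums : (∑ k ∈ Finset.range N, a k * ∫ x in (0:ℝ)..1,
          2 * w k x * wd k x * (u x * v x))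
        = ∑ k ∈ Finset.range N, a k * ∫ x in (0:ℝ)..1,
            (w k x)^2 * (ud x * v x + u x * vd x) :=
      Finset.sum_congr rfl fun k _ => by rw [hIk k]
    rw [hsplit1, hsplit2, hsum1, hsum2, hsums]
    linarith
  -- the limit argument
  have hnnA : ∀ N : ℕ, (0:ℝ) ≤ ∫ x in (0:ℝ)..1,
      ((∑ k ∈ Finset.range N, a k * (w k x)^2) - (u x)^2)^2 :=
    fun N => intervalIntegral.integral_nonneg zero_le_one fun x _ => sq_nonneg _
  have hnnB : ∀ N : ℕ, (0:ℝ) ≤ ∫ x in (0:ℝ)..1,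
      ((∑ k ∈ Finset.range N, a k * (2 * w k x * wd k x)) - 2 * u x * ud x)^2 :=
    fun N => intervalIntegral.integral_nonneg zero_le_one fun x _ => sq_nonneg _
  have hAB : Tendsto (fun N : ℕ =>
      (∫ x in (0:ℝ)..1, ((∑ k ∈ Finset.range N, a k * (w k x)^2) - (u x)^2)^2) +
        ∫ x in (0:ℝ)..1, ((∑ k ∈ Finset.range N,
          a k * (2 * w k x * wd k x)) - 2 * u x * ud x)^2) atTop (𝓝 0) := by
    have h2 := htend.mul htend
    rw [mul_zero] at h2
    exact h2.congr fun N => Real.mul_self_sqrt (add_nonneg (hnnA N) (hnnB N))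
  have hA : Tendsto (fun N : ℕ => ∫ x in (0:ℝ)..1,
      ((∑ k ∈ Finset.range N, a k * (w k x)^2) - (u x)^2)^2) atTop (𝓝 0) :=
    squeeze_zero hnnA (fun N => le_add_of_nonneg_right (hnnB N)) hAB
  have hB : Tendsto (fun N : ℕ => ∫ x in (0:ℝ)..1,
      ((∑ k ∈ Finset.range N, a k * (2 * w k x * wd k x)) - 2 * u x * ud x)^2)
      atTop (𝓝 0) :=
    squeeze_zero hnnB (fun N => le_add_of_nonneg_left (hnnA N)) hAB
  have T1 := tendsto_int_mul
    (fun N x => (∑ k ∈ Finset.range N, a k * (2 * w k x * wd k x)) - 2 * u x * ud x)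
    (fun x => u x * v x)
    (fun N => (hcDN N).sub hc2uud) hcp hB
  have T2 := tendsto_int_mul
    (fun N x => (∑ k ∈ Finset.range N, a k * (w k x)^2) - (u x)^2)
    (fun x => ud x * v x + u x * vd x)
    (fun N => (hcSN N).sub (hcu.pow 2)) hcpd hA
  have T := T1.sub T2
  rw [sub_zero] at T
  have hconst : (fun N : ℕ => (∫ x in (0:ℝ)..1, ((∑ k ∈ Finset.range N,
        a k * (2 * w k x * wd k x)) - 2 * u x * ud x) * (u x * v x))
      - ∫ x in (0:ℝ)..1, ((∑ k ∈ Finset.range N, a k * (w k x)^2) - (u x)^2) *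
        (ud x * v x + u x * vd x)) = fun _ => W1 := funext E1
  rw [hconst] at T
  exact hW1 (tendsto_nhds_unique tendsto_const_nhds T)


end SLProof

/-- No squared normalized eigenfunction `g_{i,n}²` can be written as an `H¹`-convergent
series of the other squared eigenfunctions `g_{j,m}²`, `(j,m) ≠ (i,n)`: there is no
sequence of indices and coefficients whose partial sums converge to `g_{i,n}²` in the
`H¹` norm `‖f‖ = √(∫₀¹ f² + ∫₀¹ f'²)`. -/
theorem squared_eigenfunction_not_H1_series_of_others
    (q : ℝ → ℝ) (hq : ContinuousOn q (Set.Icc (0:ℝ) 1))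
    (α β γ : ℝ) (hβγ : Real.sin (β - γ) ≠ 0)
    (lam : ℕ → ℕ → ℝ)
    (hinj1 : Function.Injective (lam 1)) (hinj2 : Function.Injective (lam 2))
    (g g' g'' : ℕ → ℕ → ℝ → ℝ)
    (hg : ∀ i ∈ ({1, 2} : Set ℕ), ∀ n : ℕ, ∀ x ∈ Set.Icc (0:ℝ) 1,
      HasDerivAt (g i n) (g' i n x) x ∧ HasDerivAt (g' i n) (g'' i n x) x)
    (hg'' : ∀ i ∈ ({1, 2} : Set ℕ), ∀ n : ℕ, ContinuousOn (g'' i n) (Set.Icc (0:ℝ) 1))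
    (hne : ∀ i ∈ ({1, 2} : Set ℕ), ∀ n : ℕ, ∃ x ∈ Set.Icc (0:ℝ) 1, g i n x ≠ 0)
    (heq : ∀ i ∈ ({1, 2} : Set ℕ), ∀ n : ℕ, ∀ x ∈ Set.Icc (0:ℝ) 1,
      -g'' i n x + q x * g i n x = lam i n * g i n x)
    (hnorm : ∀ i ∈ ({1, 2} : Set ℕ), ∀ n : ℕ, (∫ x in (0:ℝ)..1, (g i n x)^2) = 1)
    (hbc0 : ∀ i ∈ ({1, 2} : Set ℕ), ∀ n : ℕ,
      g i n 0 * Real.cos α + g' i n 0 * Real.sin α = 0)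
    (hbc1β : ∀ n : ℕ, g 1 n 1 * Real.cos β + g' 1 n 1 * Real.sin β = 0)
    (hbc1γ : ∀ n : ℕ, g 2 n 1 * Real.cos γ + g' 2 n 1 * Real.sin γ = 0) :
    ¬ ∃ (i n : ℕ) (idx : ℕ → ℕ × ℕ) (a : ℕ → ℝ),
        i ∈ ({1, 2} : Set ℕ) ∧
        (∀ k : ℕ, (idx k).1 ∈ ({1, 2} : Set ℕ) ∧ idx k ≠ (i, n)) ∧
        Filter.Tendsto
          (fun N : ℕ =>
            Real.sqrt
              ((∫ x in (0:ℝ)..1,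
                  ((∑ k ∈ Finset.range N, a k * (g (idx k).1 (idx k).2 x)^2)
                    - (g i n x)^2)^2) +
                ∫ x in (0:ℝ)..1,
                  ((∑ k ∈ Finset.range N,
                      a k * (2 * g (idx k).1 (idx k).2 x * g' (idx k).1 (idx k).2 x))
                    - 2 * g i n x * g' i n x)^2))
          Filter.atTop (nhds 0) := by
  rintro ⟨i, n, idx, a, hi, hidx, htend⟩
  have hclcont : Continuous (fun x : ℝ => max 0 (min x 1)) :=
    continuous_const.max (continuous_id.min continuous_const)
  have hclmem : ∀ x : ℝ, max 0 (min x 1) ∈ Set.Icc (0:ℝ) 1 :=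
    fun x => ⟨le_max_left _ _, max_le (by norm_num) (min_le_right _ _)⟩
  set Q : ℝ → ℝ := fun x => q (max 0 (min x 1)) with hQdef
  have hQ : Continuous Q := hq.comp_continuous hclcont hclmem
  have hQeq : ∀ x ∈ Set.Icc (0:ℝ) 1, Q x = q x := by
    intro x hx
    simp only [hQdef]
    rw [min_eq_left hx.2, max_eq_right hx.1]
  obtain ⟨M, hM⟩ := IsCompact.exists_bound_of_continuousOn isCompact_Icc hq
  have hMQ : ∀ t, |Q t| ≤ M := by
    intro t
    have := hM _ (hclmem t)
    simpa [hQdef, Real.norm_eq_abs] using this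
  have h1mem : (1:ℕ) ∈ ({1,2} : Set ℕ) := by simp
  have h2mem : (2:ℕ) ∈ ({1,2} : Set ℕ) := by simp
  have geq : ∀ j ∈ ({1,2} : Set ℕ), ∀ m : ℕ, ∀ x ∈ Set.Icc (0:ℝ) 1,
      g'' j m x = (Q x - lam j m) * g j m x := by
    intro j hj m x hx
    have h := heq j hj m x hx
    rw [hQeq x hx]
    linear_combination -h
  have hii : i = 1 ∨ i = 2 := by simpa using hi
  rcases hii with rfl | rfl
  · refine SLProof.key Q hQ M hMQ α β γ hβγ (lam 1 n) (g 1 n) (g' 1 n) (g'' 1 n)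
      (hg 1 h1mem n) (geq 1 h1mem n) (hnorm 1 h1mem n) (hbc0 1 h1mem n) (hbc1β n)
      (fun k => lam (idx k).1 (idx k).2)
      (fun k => g (idx k).1 (idx k).2) (fun k => g' (idx k).1 (idx k).2)
      (fun k => g'' (idx k).1 (idx k).2)
      (fun k => hg (idx k).1 (hidx k).1 (idx k).2)
      (fun k => geq (idx k).1 (hidx k).1 (idx k).2)
      (fun k => hnorm (idx k).1 (hidx k).1 (idx k).2)
      (fun k => hbc0 (idx k).1 (hidx k).1 (idx k).2)
      ?_ a htend
    intro k
    beta_reduce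
    have hjj : (idx k).1 = 1 ∨ (idx k).1 = 2 := by simpa using (hidx k).1
    rcases hjj with hj | hj
    · left
      constructor
      · rw [hj]; exact hbc1β _
      · intro hmu
        rw [hj] at hmu
        exact (hidx k).2 (Prod.ext hj (hinj1 hmu))
    · right
      rw [hj]; exact hbc1γ _
  · have hγβ : Real.sin (γ - β) ≠ 0 := by
      rw [show γ - β = -(β - γ) by ring, Real.sin_neg]
      simpa using hβγ
    refine SLProof.key Q hQ M hMQ α γ β hγβ (lam 2 n) (g 2 n) (g' 2 n) (g'' 2 n)
      (hg 2 h2mem n) (geq 2 h2mem n) (hnorm 2 h2mem n) (hbc0 2 h2mem n) (hbc1γ n)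
      (fun k => lam (idx k).1 (idx k).2)
      (fun k => g (idx k).1 (idx k).2) (fun k => g' (idx k).1 (idx k).2)
      (fun k => g'' (idx k).1 (idx k).2)
      (fun k => hg (idx k).1 (hidx k).1 (idx k).2)
      (fun k => geq (idx k).1 (hidx k).1 (idx k).2)
      (fun k => hnorm (idx k).1 (hidx k).1 (idx k).2)
      (fun k => hbc0 (idx k).1 (hidx k).1 (idx k).2)
      ?_ a htend
    intro k
    beta_reduce
    have hjj : (idx k).1 = 1 ∨ (idx k).1 = 2 := by simpa using (hidx k).1
    rcases hjj with hj | hj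
    · right
      rw [hj]; exact hbc1β _
    · left
      constructor
      · rw [hj]; exact hbc1γ _
      · intro hmu
        rw [hj] at hmu
        exact (hidx k).2 (Prod.ext hj (hinj2 hmu))
end

section
/- Let q : ℝ → ℝ be continuous on [0,1] and α, β, γ ∈ ℝ with sin(β − γ) ≠ 0. Let I be a finite subset of {1,2} × ℕ, and for (i,n) ∈ I let λ_{i,n} ∈ ℝ with n ↦ λ_{1,n} and n ↦ λ_{2,n} injective on the relevant indices, and let g_{i,n} : ℝ → ℝ be twice continuously differentiable, not identically zero on [0,1], satisfying −g_{i,n}'' + q g_{i,n} = λ_{i,n} g_{i,n} on [0,1], ∫₀¹ g_{i,n}² = 1, g_{i,n}(0)cos α + g_{i,n}'(0)sin α = 0, and g_{1,n}(1)cos β + g_{1,n}'(1)sin β = 0 for i = 1, g_{2,n}(1)cos γ + g_{2,n}'(1)sin γ = 0 for i = 2. Let ω_{i,n} > 0 and μ_{i,n} ∈ ℝ for (i,n) ∈ I. If Σ_{(i,n)∈I} ω_{i,n}(λ_{i,n} − μ_{i,n}) g_{i,n}(x)² = 0 for all x ∈ [0,1], then λ_{i,n} = μ_{i,n} for all (i,n)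 ∈ I. (Consequently, the only critical points of the least squares functional G(q) = Σ ω_{i,n}(λ_{q,i,n} − λ_{Q,i,n})² with finite index set are its global minima.) -/
/-!
Write `c_p = ω_p (λ_p - μ_p)` and `A_k = ∑_p c_p λ_p^k g_p²`. Differentiating `A_k ≡ 0` with
`g_p'' = (q - λ_p) g_p` gives `∑_p c_p λ_p^k g_p'² = A_{k+1}` and shows that `A_{k+1}` is
constant; the boundary condition at `0`, common to all `g_p`, makes this constant zero. Hence
`∑_p c_p (g_p(1)² + g_p'(1)²) λ_p^k = 0` for every `k`. The eigenvalues are pairwise distinct: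
within one problem by assumption, and across the two problems because a common eigenvalue would,
through the constant Wronskian, make one eigenfunction satisfy both conditions at `1`, which
`sin (β - γ) ≠ 0` forbids. So the Vandermonde system forces `c_p (g_p(1)² + g_p'(1)²) = 0`, and
`g_p(1)² + g_p'(1)² > 0` by uniqueness for the initial value problem at `1`.
-/

open Set Finset Real

theorem det_eq_zero_of_mul_add_mul_eq_zero {R : Type*} [CommRing R] [NoZeroDivisors R]
    {a b c₁ d₁ c₂ d₂ : R} (hab : a ≠ 0 ∨ b ≠ 0)
    (h₁ : a * c₁ + b * d₁ = 0) (h₂ : a * c₂ + b * d₂ = 0) : c₁ * d₂ - d₁ * c₂ = 0 := by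
  rcases hab with ha | hb
  · exact (mul_eq_zero.mp (by linear_combination d₂ * h₁ - d₁ * h₂ :
      a * (c₁ * d₂ - d₁ * c₂) = 0)).resolve_left ha
  · exact (mul_eq_zero.mp (by linear_combination c₁ * h₂ - c₂ * h₁ :
      b * (c₁ * d₂ - d₁ * c₂) = 0)).resolve_left hb

theorem mul_add_mul_eq_zero_of_det_eq_zero {R : Type*} [CommRing R] [NoZeroDivisors R]
    {a b c₁ d₁ c₂ d₂ : R} (hcd : c₁ ≠ 0 ∨ d₁ ≠ 0)
    (hdet : c₁ * d₂ - d₁ * c₂ = 0) (h₁ : a * c₁ + b * d₁ = 0) : a * c₂ + b * d₂ = 0 := by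
  rcases hcd with hc | hd
  · exact (mul_eq_zero.mp (by linear_combination c₂ * h₁ + b * hdet :
      c₁ * (a * c₂ + b * d₂) = 0)).resolve_left hc
  · exact (mul_eq_zero.mp (by linear_combination d₂ * h₁ - a * hdet :
      d₁ * (a * c₂ + b * d₂) = 0)).resolve_left hd

theorem Real.cos_ne_zero_or_sin_ne_zero (x : ℝ) : cos x ≠ 0 ∨ sin x ≠ 0 := by
  by_contra! h
  simpa [h.1, h.2] using sin_sq_add_cos_sq x

theorem Finset.eq_zero_of_forall_sum_mul_pow_eq_zero {R ι : Type*} [CommRing R] [IsDomain R]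
    {s : Finset ι} {f v : ι → R} (hf : InjOn f s) (h : ∀ k : ℕ, ∑ i ∈ s, v i * f i ^ k = 0) :
    ∀ i ∈ s, v i = 0 := by
  set e := s.equivFin.symm
  have hv := Matrix.eq_zero_of_forall_pow_sum_mul_pow_eq_zero (f := fun j => f (e j))
    (v := fun j => v (e j)) (fun j₁ j₂ hj => e.injective (Subtype.ext (hf (e j₁).2 (e j₂).2 hj)))
    fun k => by
      rw [e.sum_comp (fun i => v i * f i ^ (k : ℕ)), s.sum_coe_sort (fun i => v i * f i ^ (k : ℕ))]
      exact h k
  intro i hi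
  simpa [e] using congrFun hv (s.equivFin ⟨i, hi⟩)

section Interval

variable {E : Type*} [NormedAddCommGroup E] [NormedSpace ℝ E] {f : ℝ → E} {a b : ℝ}

theorem HasDerivAt.eq_zero_of_eqOn_Icc {f' : E} {x : ℝ} (hf : HasDerivAt f f' x)
    (hab : a < b) (hx : x ∈ Icc a b) (h0 : EqOn f 0 (Icc a b)) : f' = 0 :=
  (uniqueDiffOn_Icc hab x hx).eq_deriv _ hf.hasDerivWithinAt
    ((hasDerivWithinAt_const x _ (0 : E)).congr h0 (h0 hx))

theorem eq_left_of_hasDerivAt_zero (hf : ∀ x ∈ Icc a b, HasDerivAt f 0 x) :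
    ∀ x ∈ Icc a b, f x = f a :=
  constant_of_has_deriv_right_zero (HasDerivAt.continuousOn hf)
    fun x hx => (hf x (Ico_subset_Icc_self hx)).hasDerivWithinAt

end Interval

namespace SturmLiouville

def IsSolution (q : ℝ → ℝ) (lam : ℝ) (g g' : ℝ → ℝ) (s : Set ℝ) : Prop :=
  ∀ x ∈ s, HasDerivAt g (g' x) x ∧ HasDerivAt g' ((q x - lam) * g x) x

section Solution

variable {q : ℝ → ℝ} {lam a b : ℝ} {g g' : ℝ → ℝ}

theorem IsSolution.eqOn_zero_of_right (hq : ContinuousOn q (Icc a b))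
    (hg : IsSolution q lam g g' (Icc a b)) (hb : g b = 0) (hb' : g' b = 0) :
    EqOn g 0 (Icc a b) := by
  obtain ⟨C, hC⟩ :=
    isCompact_Icc.exists_bound_of_continuousOn (hq.sub (continuousOn_const (c := lam)))
  have hv : ∀ t ∈ Ioc a b, LipschitzOnWith (max 1 C.toNNReal)
      (fun u : ℝ × ℝ => (u.2, (q t - lam) * u.1)) univ := by
    intro t ht
    refine ((LipschitzWith.prod_snd.prodMk
      ((lipschitzWith_smul (q t - lam)).comp LipschitzWith.prod_fst)).weaken
      (max_le_max le_rfl ?_)).lipschitzOnWith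
    rw [mul_one, ← NNReal.coe_le_coe, coe_nnnorm, Real.coe_toNNReal']
    exact (hC t (Ioc_subset_Icc_self ht)).trans (le_max_left _ _)
  have hsol : EqOn (fun x => (g x, g' x)) (fun _ => 0) (Icc a b) :=
    ODE_solution_unique_of_mem_Icc_left (v := fun t u => (u.2, (q t - lam) * u.1)) hv
      (HasDerivAt.continuousOn fun x hx => (hg x hx).1.prodMk (hg x hx).2)
      (fun x hx => ((hg x (Ioc_subset_Icc_self hx)).1.prodMk
        (hg x (Ioc_subset_Icc_self hx)).2).hasDerivWithinAt)
      (fun _ _ => mem_univ _) continuousOn_const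
      (fun x _ => by simpa [Prod.mk_zero_zero] using hasDerivWithinAt_const x _ (0 : ℝ × ℝ))
      (fun _ _ => mem_univ _) (by simp [hb, hb'])
  exact fun x hx => congrArg Prod.fst (hsol hx)

theorem IsSolution.ne_zero_or_ne_zero_of_right (hq : ContinuousOn q (Icc a b))
    (hg : IsSolution q lam g g' (Icc a b)) (hne : ∃ x ∈ Icc a b, g x ≠ 0) : g b ≠ 0 ∨ g' b ≠ 0 := by
  by_contra! h
  obtain ⟨x, hx, hgx⟩ := hne
  exact hgx (hg.eqOn_zero_of_right hq h.1 h.2 hx)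

theorem IsSolution.wronskian_eq {g₂ g₂' : ℝ → ℝ} (h₁ : IsSolution q lam g g' (Icc a b))
    (h₂ : IsSolution q lam g₂ g₂' (Icc a b)) :
    ∀ x ∈ Icc a b, g x * g₂' x - g' x * g₂ x = g a * g₂' a - g' a * g₂ a :=
  eq_left_of_hasDerivAt_zero (f := fun x => g x * g₂' x - g' x * g₂ x) fun x hx => by
    obtain ⟨hd₁, hd₁'⟩ := h₁ x hx
    obtain ⟨hd₂, hd₂'⟩ := h₂ x hx
    exact ((hd₁.fun_mul hd₂').fun_sub (hd₁'.fun_mul hd₂)).congr_deriv (by ring)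

end Solution

theorem sin_sub_eq_zero_of_common_eigenvalue {q : ℝ → ℝ} {lam a b α β γ : ℝ}
    {g₁ g₁' g₂ g₂' : ℝ → ℝ} (hab : a ≤ b)
    (h₁ : IsSolution q lam g₁ g₁' (Icc a b)) (h₂ : IsSolution q lam g₂ g₂' (Icc a b))
    (hα₁ : g₁ a * cos α + g₁' a * sin α = 0) (hα₂ : g₂ a * cos α + g₂' a * sin α = 0)
    (hβ : g₁ b * cos β + g₁' b * sin β = 0) (hγ : g₂ b * cos γ + g₂' b * sin γ = 0)
    (hne₁ : g₁ b ≠ 0 ∨ g₁' b ≠ 0) (hne₂ : g₂ b ≠ 0 ∨ g₂' b ≠ 0) : sin (β - γ) = 0 := by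
  have hWa : g₁ a * g₂' a - g₁' a * g₂ a = 0 :=
    det_eq_zero_of_mul_add_mul_eq_zero (cos_ne_zero_or_sin_ne_zero α)
      (by linear_combination hα₁) (by linear_combination hα₂)
  have hWb : g₁ b * g₂' b - g₁' b * g₂ b = 0 := by
    rw [h₁.wronskian_eq h₂ b (right_mem_Icc.2 hab), hWa]
  have hβ₂ : cos β * g₂ b + sin β * g₂' b = 0 :=
    mul_add_mul_eq_zero_of_det_eq_zero hne₁ hWb (by linear_combination hβ)
  have hdet : cos β * sin γ - sin β * cos γ = 0 :=
    det_eq_zero_of_mul_add_mul_eq_zero hne₂ (by linear_combination hβ₂) hγ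
  rw [sin_sub]
  linear_combination -hdet

section Moments

variable {ι : Type*} {I : Finset ι} {q : ℝ → ℝ} {lam : ι → ℝ} {g g' : ι → ℝ → ℝ} {a b x : ℝ}

theorem hasDerivAt_sum_mul_sq (hg : ∀ p ∈ I, IsSolution q (lam p) (g p) (g' p) (Icc a b))
    (d : ι → ℝ) (hx : x ∈ Icc a b) :
    HasDerivAt (fun y => ∑ p ∈ I, d p * g p y ^ 2) (2 * ∑ p ∈ I, d p * (g p x * g' p x)) x := by
  rw [mul_sum]
  refine HasDerivAt.fun_sum fun p hp => ?_
  exact (((hg p hp x hx).1.fun_pow 2).const_mul (d p)).congr_deriv (by norm_num; ring)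

theorem hasDerivAt_sum_mul_mul_deriv (hg : ∀ p ∈ I, IsSolution q (lam p) (g p) (g' p) (Icc a b))
    (d : ι → ℝ) (hx : x ∈ Icc a b) :
    HasDerivAt (fun y => ∑ p ∈ I, d p * (g p y * g' p y))
      (∑ p ∈ I, d p * g' p x ^ 2 + q x * ∑ p ∈ I, d p * g p x ^ 2
        - ∑ p ∈ I, d p * lam p * g p x ^ 2) x := by
  rw [mul_sum, ← sum_add_distrib, ← sum_sub_distrib]
  refine HasDerivAt.fun_sum fun p hp => ?_
  exact (((hg p hp x hx).1.fun_mul (hg p hp x hx).2).const_mul (d p)).congr_deriv (by ring)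

theorem hasDerivAt_sum_mul_deriv_sq (hg : ∀ p ∈ I, IsSolution q (lam p) (g p) (g' p) (Icc a b))
    (d : ι → ℝ) (hx : x ∈ Icc a b) :
    HasDerivAt (fun y => ∑ p ∈ I, d p * g' p y ^ 2)
      (2 * (q x * ∑ p ∈ I, d p * (g p x * g' p x)
        - ∑ p ∈ I, d p * lam p * (g p x * g' p x))) x := by
  rw [mul_sum, ← sum_sub_distrib, mul_sum]
  refine HasDerivAt.fun_sum fun p hp => ?_
  exact (((hg p hp x hx).2.fun_pow 2).const_mul (d p)).congr_deriv (by norm_num; ring)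

theorem sin_sq_mul_sum_mul_sq_eq {α : ℝ} {u v d : ι → ℝ}
    (hbc : ∀ p ∈ I, u p * cos α + v p * sin α = 0) :
    sin α ^ 2 * ∑ p ∈ I, d p * v p ^ 2 = cos α ^ 2 * ∑ p ∈ I, d p * u p ^ 2 := by
  rw [mul_sum, mul_sum]
  refine sum_congr rfl fun p hp => ?_
  linear_combination d p * (v p * sin α - u p * cos α) * hbc p hp

theorem sum_mul_mul_deriv_eq_zero (hg : ∀ p ∈ I, IsSolution q (lam p) (g p) (g' p) (Icc a b))
    (hab : a < b) {d : ι → ℝ} (hd : ∀ x ∈ Icc a b, ∑ p ∈ I, d p * g p x ^ 2 = 0) :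
    ∀ x ∈ Icc a b, ∑ p ∈ I, d p * (g p x * g' p x) = 0 := fun x hx => by
  have := (hasDerivAt_sum_mul_sq hg d hx).eq_zero_of_eqOn_Icc hab hx hd
  linarith

theorem sum_mul_deriv_sq_eq (hg : ∀ p ∈ I, IsSolution q (lam p) (g p) (g' p) (Icc a b))
    (hab : a < b) {d : ι → ℝ} (hd : ∀ x ∈ Icc a b, ∑ p ∈ I, d p * g p x ^ 2 = 0) :
    ∀ x ∈ Icc a b, ∑ p ∈ I, d p * g' p x ^ 2 = ∑ p ∈ I, d p * lam p * g p x ^ 2 := fun x hx => by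
  have := (hasDerivAt_sum_mul_mul_deriv hg d hx).eq_zero_of_eqOn_Icc hab hx
    (sum_mul_mul_deriv_eq_zero hg hab hd)
  rw [hd x hx] at this
  linarith

theorem sum_mul_eigenvalue_mul_sq_eq_zero
    (hg : ∀ p ∈ I, IsSolution q (lam p) (g p) (g' p) (Icc a b)) (hab : a < b) {α : ℝ}
    (hbc : ∀ p ∈ I, g p a * cos α + g' p a * sin α = 0) {d : ι → ℝ}
    (hd : ∀ x ∈ Icc a b, ∑ p ∈ I, d p * g p x ^ 2 = 0) :
    ∀ x ∈ Icc a b, ∑ p ∈ I, d p * lam p * g p x ^ 2 = 0 := by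
  have ha : a ∈ Icc a b := left_mem_Icc.2 hab.le
  have hB := sum_mul_mul_deriv_eq_zero hg hab hd
  have hCA := sum_mul_deriv_sq_eq hg hab hd
  -- the `∑ d λ g g'` terms of the two derivatives cancel, leaving `2 q ∑ d g g' = 0`
  have hconst := eq_left_of_hasDerivAt_zero
    (f := fun x => ∑ p ∈ I, d p * lam p * g p x ^ 2 + ∑ p ∈ I, d p * g' p x ^ 2) fun x hx =>
      ((hasDerivAt_sum_mul_sq hg (fun p => d p * lam p) hx).add
        (hasDerivAt_sum_mul_deriv_sq hg d hx)).congr_deriv (by rw [hB x hx]; ring)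
  have hzero : ∑ p ∈ I, d p * lam p * g p a ^ 2 = 0 := by
    by_cases hs : sin α = 0
    · have hc : cos α ≠ 0 := (cos_ne_zero_or_sin_ne_zero α).resolve_right (not_not.2 hs)
      refine sum_eq_zero fun p hp => ?_
      have := hbc p hp
      rw [hs, mul_zero, add_zero] at this
      simp [(mul_eq_zero.mp this).resolve_right hc]
    · have := sin_sq_mul_sum_mul_sq_eq (d := d) hbc
      rw [hd a ha, mul_zero] at this
      rw [← hCA a ha]
      exact (mul_eq_zero.mp this).resolve_left (pow_ne_zero 2 hs)
  intro x hx
  linarith [hconst x hx, hCA x hx, hCA a ha]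

theorem sum_mul_pow_mul_sq_eq_zero
    (hg : ∀ p ∈ I, IsSolution q (lam p) (g p) (g' p) (Icc a b)) (hab : a < b) {α : ℝ}
    (hbc : ∀ p ∈ I, g p a * cos α + g' p a * sin α = 0) {c : ι → ℝ}
    (hc : ∀ x ∈ Icc a b, ∑ p ∈ I, c p * g p x ^ 2 = 0) (k : ℕ) :
    ∀ x ∈ Icc a b, ∑ p ∈ I, c p * lam p ^ k * g p x ^ 2 = 0 := by
  induction k with
  | zero => simpa using hc
  | succ k ih =>
    simpa only [pow_succ, mul_assoc] using sum_mul_eigenvalue_mul_sq_eq_zero hg hab hbc ih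

end Moments

theorem eq_zero_of_sum_mul_sq_eq_zero {ι : Type*} {I : Finset ι} {q : ℝ → ℝ} {lam : ι → ℝ}
    {g g' : ι → ℝ → ℝ} {a b α : ℝ} (hab : a < b)
    (hg : ∀ p ∈ I, IsSolution q (lam p) (g p) (g' p) (Icc a b))
    (hbc : ∀ p ∈ I, g p a * cos α + g' p a * sin α = 0) (hlam : InjOn lam I)
    (hne : ∀ p ∈ I, g p b ≠ 0 ∨ g' p b ≠ 0) {c : ι → ℝ}
    (hc : ∀ x ∈ Icc a b, ∑ p ∈ I, c p * g p x ^ 2 = 0) : ∀ p ∈ I, c p = 0 := by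
  have hb : b ∈ Icc a b := right_mem_Icc.2 hab.le
  have hmoments : ∀ k : ℕ, ∑ p ∈ I, c p * (g p b ^ 2 + g' p b ^ 2) * lam p ^ k = 0 := fun k => by
    have hg' := sum_mul_deriv_sq_eq hg hab (sum_mul_pow_mul_sq_eq_zero hg hab hbc hc k) b hb
    calc ∑ p ∈ I, c p * (g p b ^ 2 + g' p b ^ 2) * lam p ^ k
        = ∑ p ∈ I, c p * lam p ^ k * g p b ^ 2 + ∑ p ∈ I, c p * lam p ^ k * g' p b ^ 2 := by
          rw [← sum_add_distrib]
          exact sum_congr rfl fun p _ => by ring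
      _ = 0 := by
          rw [hg', sum_mul_pow_mul_sq_eq_zero hg hab hbc hc k b hb]
          simpa only [pow_succ, mul_assoc, zero_add] using
            sum_mul_pow_mul_sq_eq_zero hg hab hbc hc (k + 1) b hb
  intro p hp
  have hpos : 0 < g p b ^ 2 + g' p b ^ 2 := by
    rcases hne p hp with h | h <;> positivity
  exact (mul_eq_zero.mp (eq_zero_of_forall_sum_mul_pow_eq_zero hlam hmoments p hp)).resolve_right
    hpos.ne'

end SturmLiouville

theorem injOn_of_rows_of_disjoint {I : Finset (ℕ × ℕ)} {lam : ℕ → ℕ → ℝ}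
    (hI : ∀ p ∈ I, p.1 ∈ ({1, 2} : Set ℕ))
    (hinj1 : ∀ n m : ℕ, (1, n) ∈ I → (1, m) ∈ I → lam 1 n = lam 1 m → n = m)
    (hinj2 : ∀ n m : ℕ, (2, n) ∈ I → (2, m) ∈ I → lam 2 n = lam 2 m → n = m)
    (h12 : ∀ n m : ℕ, (1, n) ∈ I → (2, m) ∈ I → lam 1 n ≠ lam 2 m) :
    InjOn (fun p : ℕ × ℕ => lam p.1 p.2) I := by
  rintro ⟨i, n⟩ hn ⟨j, m⟩ hm (h : lam i n = lam j m)
  obtain rfl | rfl : i = 1 ∨ i = 2 := hI _ hn <;> obtain rfl | rfl : j = 1 ∨ j = 2 := hI _ hm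
  · rw [hinj1 n m hn hm h]
  · exact absurd h (h12 n m hn hm)
  · exact absurd h.symm (h12 m n hm hn)
  · rw [hinj2 n m hn hm h]

open SturmLiouville in
theorem critical_point_is_global_minimum_general
    (q : ℝ → ℝ) (hq : ContinuousOn q (Set.Icc (0:ℝ) 1))
    (α β γ : ℝ) (hβγ : Real.sin (β - γ) ≠ 0)
    (I : Finset (ℕ × ℕ)) (hI : ∀ p ∈ I, p.1 ∈ ({1, 2} : Set ℕ))
    (lam : ℕ → ℕ → ℝ)
    (hinj1 : ∀ n m : ℕ, (1, n) ∈ I → (1, m) ∈ I → lam 1 n = lam 1 m → n = m)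
    (hinj2 : ∀ n m : ℕ, (2, n) ∈ I → (2, m) ∈ I → lam 2 n = lam 2 m → n = m)
    (g g' g'' : ℕ → ℕ → ℝ → ℝ)
    (hg : ∀ p ∈ I, ∀ x ∈ Set.Icc (0:ℝ) 1,
      HasDerivAt (g p.1 p.2) (g' p.1 p.2 x) x ∧ HasDerivAt (g' p.1 p.2) (g'' p.1 p.2 x) x)
    (hne : ∀ p ∈ I, ∃ x ∈ Set.Icc (0:ℝ) 1, g p.1 p.2 x ≠ 0)
    (heq : ∀ p ∈ I, ∀ x ∈ Set.Icc (0:ℝ) 1,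
      -g'' p.1 p.2 x + q x * g p.1 p.2 x = lam p.1 p.2 * g p.1 p.2 x)
    (hbc0 : ∀ p ∈ I, g p.1 p.2 0 * Real.cos α + g' p.1 p.2 0 * Real.sin α = 0)
    (hbc1β : ∀ n : ℕ, (1, n) ∈ I → g 1 n 1 * Real.cos β + g' 1 n 1 * Real.sin β = 0)
    (hbc1γ : ∀ n : ℕ, (2, n) ∈ I → g 2 n 1 * Real.cos γ + g' 2 n 1 * Real.sin γ = 0)
    (ω : ℕ × ℕ → ℝ) (hω : ∀ p ∈ I, 0 < ω p)
    (μ : ℕ × ℕ → ℝ)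
    (hvanish : ∀ x ∈ Set.Icc (0:ℝ) 1,
      ∑ p ∈ I, ω p * (lam p.1 p.2 - μ p) * (g p.1 p.2 x)^2 = 0) :
    ∀ p ∈ I, lam p.1 p.2 = μ p := by
  have hsol : ∀ p ∈ I, IsSolution q (lam p.1 p.2) (g p.1 p.2) (g' p.1 p.2) (Icc 0 1) :=
    fun p hp x hx => ⟨(hg p hp x hx).1,
      (hg p hp x hx).2.congr_deriv (by linear_combination -heq p hp x hx)⟩
  have hend : ∀ p ∈ I, g p.1 p.2 1 ≠ 0 ∨ g' p.1 p.2 1 ≠ 0 :=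
    fun p hp => (hsol p hp).ne_zero_or_ne_zero_of_right hq (hne p hp)
  have hlam : InjOn (fun p : ℕ × ℕ => lam p.1 p.2) I :=
    injOn_of_rows_of_disjoint hI hinj1 hinj2 fun n m hn hm h => hβγ <|
      sin_sub_eq_zero_of_common_eigenvalue zero_le_one (hsol _ hn) (h ▸ hsol _ hm)
        (hbc0 _ hn) (hbc0 _ hm) (hbc1β n hn) (hbc1γ m hm) (hend _ hn) (hend _ hm)
  intro p hp
  have hc := eq_zero_of_sum_mul_sq_eq_zero (g := fun p : ℕ × ℕ => g p.1 p.2) zero_lt_one hsol hbc0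
    hlam hend hvanish p hp
  exact sub_eq_zero.mp ((mul_eq_zero.mp hc).resolve_left (hω p hp).ne')

/-- Critical points of the least squares functional with a finite index set are global
minima: if the weighted combination `Σ_{(i,n)∈I} ω_{i,n}(λ_{i,n} − μ_{i,n}) g_{i,n}²`
of squared normalized eigenfunctions vanishes identically on `[0,1]` (with all weights
`ω_{i,n} > 0`), then `λ_{i,n} = μ_{i,n}` for all `(i,n) ∈ I`. -/
theorem critical_point_is_global_minimum
    (q : ℝ → ℝ) (hq : ContinuousOn q (Set.Icc (0:ℝ) 1))
    (α β γ : ℝ) (hβγ : Real.sin (β - γ) ≠ 0)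
    (I : Finset (ℕ × ℕ)) (hI : ∀ p ∈ I, p.1 ∈ ({1, 2} : Set ℕ))
    (lam : ℕ → ℕ → ℝ)
    (hinj1 : ∀ n m : ℕ, (1, n) ∈ I → (1, m) ∈ I → lam 1 n = lam 1 m → n = m)
    (hinj2 : ∀ n m : ℕ, (2, n) ∈ I → (2, m) ∈ I → lam 2 n = lam 2 m → n = m)
    (g g' g'' : ℕ → ℕ → ℝ → ℝ)
    (hg : ∀ p ∈ I, ∀ x ∈ Set.Icc (0:ℝ) 1,
      HasDerivAt (g p.1 p.2) (g' p.1 p.2 x) x ∧ HasDerivAt (g' p.1 p.2) (g'' p.1 p.2 x) x)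
    (hg'' : ∀ p ∈ I, ContinuousOn (g'' p.1 p.2) (Set.Icc (0:ℝ) 1))
    (hne : ∀ p ∈ I, ∃ x ∈ Set.Icc (0:ℝ) 1, g p.1 p.2 x ≠ 0)
    (heq : ∀ p ∈ I, ∀ x ∈ Set.Icc (0:ℝ) 1,
      -g'' p.1 p.2 x + q x * g p.1 p.2 x = lam p.1 p.2 * g p.1 p.2 x)
    (hnorm : ∀ p ∈ I, (∫ x in (0:ℝ)..1, (g p.1 p.2 x)^2) = 1)
    (hbc0 : ∀ p ∈ I, g p.1 p.2 0 * Real.cos α + g' p.1 p.2 0 * Real.sin α = 0)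
    (hbc1β : ∀ n : ℕ, (1, n) ∈ I → g 1 n 1 * Real.cos β + g' 1 n 1 * Real.sin β = 0)
    (hbc1γ : ∀ n : ℕ, (2, n) ∈ I → g 2 n 1 * Real.cos γ + g' 2 n 1 * Real.sin γ = 0)
    (ω : ℕ × ℕ → ℝ) (hω : ∀ p ∈ I, 0 < ω p)
    (μ : ℕ × ℕ → ℝ)
    (hvanish : ∀ x ∈ Set.Icc (0:ℝ) 1,
      ∑ p ∈ I, ω p * (lam p.1 p.2 - μ p) * (g p.1 p.2 x)^2 = 0) :
    ∀ p ∈ I, lam p.1 p.2 = μ p :=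
  critical_point_is_global_minimum_general q hq α β γ hβγ I hI lam hinj1 hinj2 g g' g'' hg hne heq
    hbc0 hbc1β hbc1γ ω hω μ hvanish
end
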